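/- arXiv:1509.04316 — 8 statements merged into one kernel-verified Lean document; each statement's English description precedes it below -/
import Mathlib

section
/- If a, b > 1 are multiplicatively independent positive integers (i.e., a^x ≠ b^y for all positive integers x, y), then for every ε > 0 there exists D₀ such that for every D > D₀ there exist positive integers x, y with D < a^x · b^y < (1+ε)·D. -/
theorem stmt_0 (a b : ℕ) (ha : 1 < a) (hb : 1 < b)
    (hindep : ∀ x y : ℕ, 0 < x → 0 < y → a ^ x ≠ b ^ y)
    (ε : ℝ) (hε : 0 < ε) :
    ∃ D₀ : ℝ, ∀ D : ℝ, D₀ < D →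
      ∃ x y : ℕ, 0 < x ∧ 0 < y ∧
        D < (a : ℝ) ^ x * (b : ℝ) ^ y ∧ (a : ℝ) ^ x * (b : ℝ) ^ y < (1 + ε) * D := by
  set α := Real.log a with hαdef
  set β := Real.log b with hβdef
  have ha1 : (1:ℝ) < a := by exact_mod_cast ha
  have hb1 : (1:ℝ) < b := by exact_mod_cast hb
  have hαpos : 0 < α := Real.log_pos ha1
  have hβpos : 0 < β := Real.log_pos hb1
  set δ := Real.log (1 + ε) with hδdef
  have hδpos : 0 < δ := Real.log_pos (by linarith)
  -- density of the subgroup generated by α and β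
  have hdense : Dense ((AddSubgroup.closure {α, β} : AddSubgroup ℝ) : Set ℝ) := by
    rcases AddSubgroup.dense_or_cyclic (AddSubgroup.closure {α, β}) with h | ⟨g, hg⟩
    · exact h
    · exfalso
      have hαm : α ∈ AddSubgroup.closure ({α, β} : Set ℝ) :=
        AddSubgroup.subset_closure (by simp)
      have hβm : β ∈ AddSubgroup.closure ({α, β} : Set ℝ) :=
        AddSubgroup.subset_closure (by simp)
      rw [hg, AddSubgroup.mem_closure_singleton] at hαm hβm
      obtain ⟨m, hm⟩ := hαm
      obtain ⟨n, hn⟩ := hβm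
      have hm0 : m ≠ 0 := by rintro rfl; simp at hm; linarith
      have hn0 : n ≠ 0 := by rintro rfl; simp at hn; linarith
      have key : (n : ℝ) * α = (m : ℝ) * β := by
        rw [← hm, ← hn]; push_cast [zsmul_eq_mul]; ring
      have key2 : (n.natAbs : ℝ) * α = (m.natAbs : ℝ) * β := by
        have h := congrArg (|·|) key
        simp only [abs_mul, abs_of_pos hαpos, abs_of_pos hβpos] at h
        rwa [← Int.cast_abs, ← Int.cast_abs, Int.abs_eq_natAbs, Int.abs_eq_natAbs,
          Int.cast_natCast, Int.cast_natCast] at h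
      have hpow : (a : ℝ) ^ n.natAbs = (b : ℝ) ^ m.natAbs := by
        have h := congrArg Real.exp key2
        rwa [Real.exp_nat_mul, Real.exp_nat_mul, hαdef, hβdef,
          Real.exp_log (by linarith), Real.exp_log (by linarith)] at h
      have : a ^ n.natAbs = b ^ m.natAbs := by exact_mod_cast hpow
      exact hindep n.natAbs m.natAbs (Int.natAbs_pos.mpr hn0) (Int.natAbs_pos.mpr hm0) this
  -- extract a small positive element g of the subgroup
  obtain ⟨g, hgmem, hg0, hgδ⟩ : ∃ g ∈ (AddSubgroup.closure ({α, β} : Set ℝ)), 0 < g ∧ g < δ := by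
    obtain ⟨g, hg1, hg2⟩ := hdense.exists_mem_open (U := Set.Ioo 0 δ) isOpen_Ioo
      (Set.nonempty_Ioo.mpr hδpos)
    exact ⟨g, hg1, hg2.1, hg2.2⟩
  obtain ⟨m, n, hmn⟩ := AddSubgroup.mem_closure_pair.mp hgmem
  have hmn' : (m : ℝ) * α + (n : ℝ) * β = g := by
    rw [← hmn]; push_cast [zsmul_eq_mul]; ring
  -- constants
  set K : ℕ := ⌈α / g⌉₊ + 1 with hKdef
  have hKcast : (K : ℝ) = (⌈α / g⌉₊ : ℝ) + 1 := by rw [hKdef]; push_cast; ring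
  have hKg : α < K * g := by
    have h1 : α / g ≤ (⌈α / g⌉₊ : ℝ) := Nat.le_ceil _
    rw [div_le_iff₀ hg0] at h1
    rw [hKcast, add_mul, one_mul]
    linarith
  set y0 : ℕ := 1 + K * n.natAbs with hy0def
  set C : ℝ := (2 + (K * m.natAbs : ℕ)) * α + y0 * β with hCdef
  refine ⟨Real.exp C, fun D hD => ?_⟩
  have hDpos : 0 < D := lt_trans (Real.exp_pos C) hD
  set L := Real.log D with hLdef
  have hCL : C < L := (Real.lt_log_iff_exp_lt hDpos).mpr hD
  have hLy : (2 + (K * m.natAbs : ℕ) : ℝ) * α ≤ L - y0 * β := by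
    rw [hCdef] at hCL; linarith
  have htα : (0:ℝ) ≤ ((K * m.natAbs : ℕ) : ℝ) * α :=
    mul_nonneg (Nat.cast_nonneg _) (le_of_lt hαpos)
  have hquot_nonneg : 0 ≤ (L - y0 * β) / α := by
    apply div_nonneg _ (le_of_lt hαpos)
    rw [add_mul] at hLy
    linarith
  -- base point
  set x0 : ℕ := ⌊(L - y0 * β) / α⌋₊ with hx0def
  have hx0ge : 1 + K * m.natAbs ≤ x0 := by
    rw [hx0def]
    apply Nat.le_floor
    rw [le_div_iff₀ hαpos]
    push_cast
    rw [add_mul] at hLy ⊢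
    push_cast at hLy
    linarith
  set s : ℝ := x0 * α + y0 * β with hsdef
  have hsL : s ≤ L := by
    have h1 : (x0 : ℝ) ≤ (L - y0 * β) / α := Nat.floor_le hquot_nonneg
    rw [le_div_iff₀ hαpos] at h1
    rw [hsdef]; linarith
  have hLs : L - s < α := by
    have h1 : (L - y0 * β) / α < x0 + 1 := Nat.lt_floor_add_one _
    rw [div_lt_iff₀ hαpos, add_mul, one_mul] at h1
    rw [hsdef]; linarith
  -- stepping
  set k : ℕ := ⌊(L - s) / g⌋₊ + 1 with hkdef
  have hkcast : (k : ℝ) = (⌊(L - s) / g⌋₊ : ℝ) + 1 := by rw [hkdef]; push_cast; ring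
  have hk1 : L < s + k * g := by
    have h1 : (L - s) / g < (⌊(L - s) / g⌋₊ : ℝ) + 1 := Nat.lt_floor_add_one _
    rw [div_lt_iff₀ hg0, add_mul, one_mul] at h1
    rw [hkcast, add_mul, one_mul]
    linarith
  have hk2 : s + k * g < L + δ := by
    have h1 : (⌊(L - s) / g⌋₊ : ℝ) ≤ (L - s) / g :=
      Nat.floor_le (div_nonneg (by linarith) (le_of_lt hg0))
    rw [le_div_iff₀ hg0] at h1
    rw [hkcast, add_mul, one_mul]
    linarith
  have hkK : k ≤ K := by
    have h1 : ⌊(L - s) / g⌋₊ ≤ ⌊α / g⌋₊ :=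
      Nat.floor_le_floor (by apply div_le_div_of_nonneg_right ?_ (le_of_lt hg0) <;> linarith)
    have h2 : ⌊α / g⌋₊ ≤ ⌈α / g⌉₊ := Nat.floor_le_ceil _
    omega
  -- the exponents
  set X : ℤ := x0 + k * m with hXdef
  set Y : ℤ := y0 + k * n with hYdef
  have hkZ : (k : ℤ) ≤ K := by exact_mod_cast hkK
  have hkZ0 : (0:ℤ) ≤ k := Int.natCast_nonneg k
  have hX1 : 1 ≤ X := by
    have h1 : (0:ℤ) ≤ (k:ℤ) * (m + m.natAbs) :=
      mul_nonneg hkZ0 (by have := neg_abs_le m; rw [Int.abs_eq_natAbs] at this; linarith)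
    have h2 : (0:ℤ) ≤ ((K:ℤ) - k) * m.natAbs :=
      mul_nonneg (by linarith) (Int.natCast_nonneg m.natAbs)
    have h3 : (1 + K * m.natAbs : ℤ) ≤ x0 := by exact_mod_cast hx0ge
    have e1 : (k:ℤ) * (m + m.natAbs) = k * m + k * m.natAbs := by ring
    have e2 : ((K:ℤ) - k) * m.natAbs = K * m.natAbs - k * m.natAbs := by ring
    rw [e1] at h1; rw [e2] at h2
    rw [hXdef]
    linarith
  have hY1 : 1 ≤ Y := by
    have h1 : (0:ℤ) ≤ (k:ℤ) * (n + n.natAbs) :=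
      mul_nonneg hkZ0 (by have := neg_abs_le n; rw [Int.abs_eq_natAbs] at this; linarith)
    have h2 : (0:ℤ) ≤ ((K:ℤ) - k) * n.natAbs :=
      mul_nonneg (by linarith) (Int.natCast_nonneg n.natAbs)
    have h3 : (y0 : ℤ) = 1 + K * n.natAbs := by rw [hy0def]; push_cast; ring
    have e1 : (k:ℤ) * (n + n.natAbs) = k * n + k * n.natAbs := by ring
    have e2 : ((K:ℤ) - k) * n.natAbs = K * n.natAbs - k * n.natAbs := by ring
    rw [e1] at h1; rw [e2] at h2
    rw [hYdef]
    linarith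
  have hxcast : ((X.toNat : ℕ) : ℝ) = (x0 : ℝ) + (k : ℝ) * (m : ℝ) := by
    have h : (X.toNat : ℤ) = X := Int.toNat_of_nonneg (by linarith)
    rw [hXdef] at h
    exact_mod_cast h
  have hycast : ((Y.toNat : ℕ) : ℝ) = (y0 : ℝ) + (k : ℝ) * (n : ℝ) := by
    have h : (Y.toNat : ℤ) = Y := Int.toNat_of_nonneg (by linarith)
    rw [hYdef] at h
    exact_mod_cast h
  have hexpeq : ((X.toNat : ℕ) : ℝ) * α + ((Y.toNat : ℕ) : ℝ) * β = s + (k : ℝ) * g := by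
    rw [hxcast, hycast, hsdef, ← hmn']; ring
  have hval : (a : ℝ) ^ X.toNat * (b : ℝ) ^ Y.toNat = Real.exp (s + (k : ℝ) * g) := by
    rw [← hexpeq, Real.exp_add, Real.exp_nat_mul, Real.exp_nat_mul, hαdef, hβdef,
      Real.exp_log (by linarith : (0:ℝ) < a), Real.exp_log (by linarith : (0:ℝ) < b)]
  refine ⟨X.toNat, Y.toNat, by omega, by omega, ?_, ?_⟩
  · rw [hval]
    calc D = Real.exp L := (Real.exp_log hDpos).symm
      _ < _ := Real.exp_lt_exp.mpr hk1
  · rw [hval]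
    have h2 : Real.exp (L + δ) = (1 + ε) * D := by
      rw [Real.exp_add, hLdef, Real.exp_log hDpos, hδdef,
        Real.exp_log (by linarith : (0:ℝ) < 1 + ε)]
      ring
    calc Real.exp (s + (k : ℝ) * g) < Real.exp (L + δ) := Real.exp_lt_exp.mpr hk2
      _ = (1 + ε) * D := h2
end

section
/- For any nonnegative integers u, v and any integer n, the congruence (2x³+x)/3 ≡ n (mod 2^u·3^v) is solved by exactly 3 congruence classes x modulo 2^u·3^(v+1). -/
private lemma three_dvd_g (x : ℤ) : (3:ℤ) ∣ 2 * x ^ 3 + x := by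
  have h : ∀ a : ZMod 3, 2 * a ^ 3 + a = 0 := by decide
  have h2 : ((2 * x ^ 3 + x : ℤ) : ZMod 3) = 0 := by push_cast; exact h x
  exact_mod_cast (ZMod.intCast_zmod_eq_zero_iff_dvd (2 * x ^ 3 + x) 3).mp h2

private def SolP (N : ℤ) : Prop := ∀ n r : ℤ, ∃ x : ℤ,
  x ≡ r [ZMOD 3] ∧ 2*x^3+x ≡ 3*n [ZMOD N] ∧
  ∀ y : ℤ, y ≡ r [ZMOD 3] → 2*y^3+y ≡ 3*n [ZMOD N] → y ≡ x [ZMOD N]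

private lemma solP_three : SolP 3 := by
  intro n r
  refine ⟨r, Int.ModEq.refl r, ?_, ?_⟩
  · refine Int.modEq_iff_dvd.mpr ?_
    obtain ⟨k, hk⟩ := three_dvd_g r
    exact ⟨n - k, by linarith⟩
  · intro y hy _
    exact hy

private lemma solP_step3 {N : ℤ} (h3 : 3 ∣ N) (h : SolP N) : SolP (3 * N) := by
  obtain ⟨N₁, rfl⟩ := h3
  intro n r
  obtain ⟨x, hxr, hxn, hu⟩ := h n r
  obtain ⟨s, hs⟩ := Int.modEq_iff_dvd.mp hxn
  refine ⟨x + 3*N₁*s, ?_, ?_, ?_⟩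
  · exact (Int.modEq_iff_dvd.mpr ⟨-(N₁*s), by ring⟩).trans hxr
  · refine Int.modEq_iff_dvd.mpr ⟨-(2*x^2*s + 6*x*N₁*s^2 + 6*N₁^2*s^3), ?_⟩
    linear_combination hs
  · intro y hyr hyn
    have hyN : 2*y^3+y ≡ 3*n [ZMOD 3*N₁] := hyn.of_dvd ⟨3, by ring⟩
    obtain ⟨w, hw⟩ := Int.modEq_iff_dvd.mp (hu y hyr hyN)
    obtain ⟨c, hc⟩ := Int.modEq_iff_dvd.mp hyn
    have hy : y = x - 3*N₁*w := by linarith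
    subst hy
    refine Int.modEq_iff_dvd.mpr ⟨c - 2*x^2*w + 6*N₁*w^2*x - 6*N₁^2*w^3, ?_⟩
    linear_combination hc - hs

private lemma solP_step2 {N : ℤ} (h3 : 3 ∣ N) (h : SolP N) : SolP (2 * N) := by
  intro n r
  obtain ⟨N₁, hN₁⟩ := h3
  obtain ⟨x, hxr, hxn, hu⟩ := h n r
  obtain ⟨s, hs⟩ := Int.modEq_iff_dvd.mp hxn
  refine ⟨x + N*s, ?_, ?_, ?_⟩
  · refine (Int.modEq_iff_dvd.mpr ⟨-(N₁*s), by rw [hN₁]; ring⟩).trans hxr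
  · refine Int.modEq_iff_dvd.mpr ⟨-(3*x^2*s + 3*x*N*s^2 + N^2*s^3), ?_⟩
    linear_combination hs
  · intro y hyr hyn
    have hyN : 2*y^3+y ≡ 3*n [ZMOD N] := hyn.of_dvd ⟨2, by ring⟩
    obtain ⟨w, hw⟩ := Int.modEq_iff_dvd.mp (hu y hyr hyN)
    obtain ⟨c, hc⟩ := Int.modEq_iff_dvd.mp hyn
    have hy : y = x - N*w := by linarith
    subst hy
    refine Int.modEq_iff_dvd.mpr ⟨c - 3*x^2*w + 3*N*w^2*x - N^2*w^3, ?_⟩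
    linear_combination hc - hs

private lemma solP_congr {A B : ℤ} (h : A = B) (hA : SolP A) : SolP B := h ▸ hA

private lemma solP_three_pow : ∀ v : ℕ, SolP ((3:ℤ)^(v+1)) := by
  intro v
  induction v with
  | zero => exact solP_congr (by norm_num) solP_three
  | succ v ih =>
      exact solP_congr (by ring) (solP_step3 ⟨3^v, by ring⟩ ih)

private lemma solP_pow (u v : ℕ) : SolP ((2:ℤ)^u * 3^(v+1)) := by
  induction u with
  | zero => exact solP_congr (by ring) (solP_three_pow v)
  | succ u ih =>
      exact solP_congr (by ring) (solP_step2 ⟨2^u * 3^v, by ring⟩ ih)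

private lemma cond_iff (u v : ℕ) (n x : ℤ) :
    ((2 * x ^ 3 + x) / 3) % (2 ^ u * 3 ^ v) = n % (2 ^ u * 3 ^ v) ↔
      2*x^3+x ≡ 3*n [ZMOD (2:ℤ)^u * 3^(v+1)] := by
  have hdvd := three_dvd_g x
  have h3 : (3:ℤ) * ((2 * x ^ 3 + x) / 3) = 2 * x ^ 3 + x := Int.mul_ediv_cancel' hdvd
  have hfac : ((2:ℤ)^u * 3^(v+1)) = 3 * (2^u * 3^v) := by ring
  constructor
  · intro h
    have h' : ((2:ℤ)^u * 3^v) ∣ n - (2 * x ^ 3 + x) / 3 :=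
      Int.ModEq.dvd (show Int.ModEq (2^u*3^v) ((2 * x ^ 3 + x) / 3) n from h)
    refine Int.modEq_iff_dvd.mpr ?_
    rw [hfac]
    have := mul_dvd_mul_left (3:ℤ) h'
    rwa [mul_sub, h3] at this
  · intro h
    have h' : ((2:ℤ)^u * 3^(v+1)) ∣ 3*n - (2 * x ^ 3 + x) := Int.ModEq.dvd h
    rw [hfac, ← h3, ← mul_sub] at h'
    have h'' := (mul_dvd_mul_iff_left (by norm_num : (3:ℤ) ≠ 0)).mp h'
    exact Int.modEq_iff_dvd.mpr h''

theorem stmt_1 (u v : ℕ) (n : ℤ) :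
    ((Finset.range (2 ^ u * 3 ^ (v + 1))).filter
      (fun x : ℕ => ((2 * (x : ℤ) ^ 3 + (x : ℤ)) / 3) % (2 ^ u * 3 ^ v)
        = n % (2 ^ u * 3 ^ v))).card = 3 := by
  have hsol := solP_pow u v
  set T : ℤ := (2:ℤ)^u * 3^(v+1) with hTdef
  have hTpos : (0:ℤ) < T := by positivity
  have hT3 : (3:ℤ) ∣ T := ⟨2^u * 3^v, by rw [hTdef]; ring⟩
  have hNT : (((2 ^ u * 3 ^ (v + 1) : ℕ)) : ℤ) = T := by rw [hTdef]; push_cast; ring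
  obtain ⟨x0, h0r, h0n, h0u⟩ := hsol n 0
  obtain ⟨x1, h1r, h1n, h1u⟩ := hsol n 1
  obtain ⟨x2, h2r, h2n, h2u⟩ := hsol n 2
  have hemod : ∀ x : ℤ, 0 ≤ x % T ∧ x % T < T := fun x =>
    ⟨Int.emod_nonneg x (ne_of_gt hTpos), Int.emod_lt_of_pos x hTpos⟩
  set a0 : ℕ := (x0 % T).toNat with ha0def
  set a1 : ℕ := (x1 % T).toNat with ha1def
  set a2 : ℕ := (x2 % T).toNat with ha2def
  have ha0 : ((a0 : ℕ) : ℤ) = x0 % T := Int.toNat_of_nonneg (hemod x0).1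
  have ha1 : ((a1 : ℕ) : ℤ) = x1 % T := Int.toNat_of_nonneg (hemod x1).1
  have ha2 : ((a2 : ℕ) : ℤ) = x2 % T := Int.toNat_of_nonneg (hemod x2).1
  have hmem : ∀ (a : ℕ) (x : ℤ), ((a:ℕ):ℤ) = x % T → a < 2 ^ u * 3 ^ (v + 1) := by
    intro a x ha
    have : ((a:ℕ):ℤ) < ((2 ^ u * 3 ^ (v + 1) : ℕ) : ℤ) := by
      rw [ha, hNT]; exact (hemod x).2
    exact_mod_cast this
  have hcongr : ∀ (a : ℕ) (x : ℤ), ((a:ℕ):ℤ) = x % T → ((a:ℕ):ℤ) ≡ x [ZMOD T] := by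
    intro a x ha
    rw [ha]
    exact Int.emod_emod_of_dvd x dvd_rfl
  have hsolA : ∀ (a : ℕ) (x : ℤ), ((a:ℕ):ℤ) = x % T → 2*x^3+x ≡ 3*n [ZMOD T] →
      2*((a:ℕ):ℤ)^3+((a:ℕ):ℤ) ≡ 3*n [ZMOD T] := by
    intro a x ha hx
    have h := hcongr a x ha
    exact (((h.pow 3).mul_left 2).add h).trans hx
  have hdist : ∀ (a b : ℕ) (x y r1 r2 : ℤ), ((a:ℕ):ℤ) = x % T → ((b:ℕ):ℤ) = y % T →
      x ≡ r1 [ZMOD 3] → y ≡ r2 [ZMOD 3] → ¬ (r1 ≡ r2 [ZMOD 3]) → a ≠ b := by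
    intro a b x y r1 r2 ha hb hx hy hne hab
    apply hne
    have hxy : x ≡ y [ZMOD T] := by
      show x % T = y % T
      rw [← ha, ← hb, hab]
    exact (hx.symm.trans (hxy.of_dvd hT3)).trans hy
  have d01 : a0 ≠ a1 := hdist a0 a1 x0 x1 0 1 ha0 ha1 h0r h1r (by decide)
  have d02 : a0 ≠ a2 := hdist a0 a2 x0 x2 0 2 ha0 ha2 h0r h2r (by decide)
  have d12 : a1 ≠ a2 := hdist a1 a2 x1 x2 1 2 ha1 ha2 h1r h2r (by decide)
  have hset : ((Finset.range (2 ^ u * 3 ^ (v + 1))).filter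
      (fun x : ℕ => ((2 * (x : ℤ) ^ 3 + (x : ℤ)) / 3) % (2 ^ u * 3 ^ v)
        = n % (2 ^ u * 3 ^ v))) = {a0, a1, a2} := by
    ext z
    simp only [Finset.mem_filter, Finset.mem_range, Finset.mem_insert, Finset.mem_singleton]
    constructor
    · rintro ⟨hzlt, hz⟩
      have hz' : 2*((z:ℕ):ℤ)^3+((z:ℕ):ℤ) ≡ 3*n [ZMOD T] := (cond_iff u v n z).mp hz
      have hzT : ((z:ℕ):ℤ) % T = (z:ℤ) := by
        apply Int.emod_eq_of_lt (Int.ofNat_nonneg z)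
        rw [← hNT]
        exact_mod_cast hzlt
      have hz3b : 0 ≤ (z:ℤ) % 3 ∧ (z:ℤ) % 3 < 3 :=
        ⟨Int.emod_nonneg _ (by norm_num), Int.emod_lt_of_pos _ (by norm_num)⟩
      have hzr : (z:ℤ) ≡ (z:ℤ) % 3 [ZMOD 3] := (Int.emod_emod_of_dvd _ dvd_rfl).symm
      have hfin : ∀ (x : ℤ), ((z:ℤ) ≡ x [ZMOD T]) → ∀ b : ℕ, ((b:ℕ):ℤ) = x % T → z = b := by
        intro x hzx b hb
        have : ((z:ℕ):ℤ) = ((b:ℕ):ℤ) := by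
          rw [hb, ← hzx, hzT]
        exact_mod_cast this
      rcases (by omega : (z:ℤ) % 3 = 0 ∨ (z:ℤ) % 3 = 1 ∨ (z:ℤ) % 3 = 2) with h|h|h
      · exact Or.inl (hfin x0 (h0u z (h ▸ hzr) hz') a0 ha0)
      · exact Or.inr (Or.inl (hfin x1 (h1u z (h ▸ hzr) hz') a1 ha1))
      · exact Or.inr (Or.inr (hfin x2 (h2u z (h ▸ hzr) hz') a2 ha2))
    · rintro (rfl|rfl|rfl)
      · exact ⟨hmem a0 x0 ha0,
          (cond_iff u v n a0).mpr (hsolA a0 x0 ha0 h0n)⟩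
      · exact ⟨hmem a1 x1 ha1,
          (cond_iff u v n a1).mpr (hsolA a1 x1 ha1 h1n)⟩
      · exact ⟨hmem a2 x2 ha2,
          (cond_iff u v n a2).mpr (hsolA a2 x2 ha2 h2n)⟩
  rw [hset]
  rw [Finset.card_insert_of_notMem (by simp [d01, d02]),
    Finset.card_insert_of_notMem (by simp [d12]), Finset.card_singleton]
end

section
/- Let f(x) = a(x³−x)/6 + b(x²−x)/2 + cx with gcd(a,b,c) = 1, and let p be a prime dividing both a/6 and b/2 in the p-adic sense (i.e., v_p(a/6) > 0 and v_p(b/2) > 0, where these are p-integral). Then f is surjective as a function from Z_p to Z_p. -/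
open Polynomial

theorem stmt_2 (a b c : ℤ) (hgcd : Int.gcd a (Int.gcd b c) = 1)
    (p : ℕ) (hp : Fact p.Prime)
    (ha : 0 < padicValRat p ((a : ℚ) / 6))
    (hb : 0 < padicValRat p ((b : ℚ) / 2)) :
    ∀ n : ℤ_[p], ∃ x : ℤ_[p],
      (a : ℤ_[p]) * (x ^ 3 - x) + 3 * (b : ℤ_[p]) * (x ^ 2 - x) + 6 * (c : ℤ_[p]) * x
        = 6 * n := by
  intro n
  have hp1 : (1 : ℚ) < (p : ℚ) := by exact_mod_cast hp.out.one_lt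
  -- norms of the p-adic numbers a/6 and b/2 are < 1
  have key : ∀ q : ℚ, 0 < padicValRat p q → ‖((q : ℚ) : ℚ_[p])‖ < 1 := by
    intro q hq
    rw [Padic.eq_padicNorm]
    by_cases h0 : q = 0
    · simp [h0, padicNorm]
    · rw [padicNorm.eq_zpow_of_nonzero h0]
      have : ((p : ℚ) ^ (-padicValRat p q) : ℚ) < 1 :=
        zpow_lt_one_of_neg₀ hp1 (by omega)
      exact_mod_cast this
  have hA : ‖(((a : ℚ) / 6 : ℚ) : ℚ_[p])‖ < 1 := key _ ha
  have hB : ‖(((b : ℚ) / 2 : ℚ) : ℚ_[p])‖ < 1 := key _ hb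
  obtain ⟨α, hαnorm, h6a⟩ : ∃ α : ℤ_[p], ‖α‖ < 1 ∧ (a : ℤ_[p]) = 6 * α := by
    refine ⟨⟨(((a : ℚ) / 6 : ℚ) : ℚ_[p]), hA.le⟩, hA, ?_⟩
    apply Subtype.ext
    show (a : ℚ_[p]) = 6 * (((a : ℚ) / 6 : ℚ) : ℚ_[p])
    push_cast
    ring
  obtain ⟨β, hβnorm, h2b⟩ : ∃ β : ℤ_[p], ‖β‖ < 1 ∧ (b : ℤ_[p]) = 2 * β := by
    refine ⟨⟨(((b : ℚ) / 2 : ℚ) : ℚ_[p]), hB.le⟩, hB, ?_⟩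
    apply Subtype.ext
    show (b : ℚ_[p]) = 2 * (((b : ℚ) / 2 : ℚ) : ℚ_[p])
    push_cast
    ring
  -- p does not divide c
  have hpa : (p : ℤ) ∣ a := by
    rw [← Padic.norm_intCast_lt_one_iff]
    have : (a : ℚ_[p]) = (((a : ℚ) / 6 : ℚ) : ℚ_[p]) * ((6 : ℤ) : ℚ_[p]) := by
      push_cast; ring
    rw [this, norm_mul]
    calc ‖(((a : ℚ) / 6 : ℚ) : ℚ_[p])‖ * ‖((6 : ℤ) : ℚ_[p])‖
        ≤ ‖(((a : ℚ) / 6 : ℚ) : ℚ_[p])‖ * 1 := by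
          gcongr; exact Padic.norm_int_le_one _
      _ < 1 := by simpa using hA
  have hpb : (p : ℤ) ∣ b := by
    rw [← Padic.norm_intCast_lt_one_iff]
    have : (b : ℚ_[p]) = (((b : ℚ) / 2 : ℚ) : ℚ_[p]) * ((2 : ℤ) : ℚ_[p]) := by
      push_cast; ring
    rw [this, norm_mul]
    calc ‖(((b : ℚ) / 2 : ℚ) : ℚ_[p])‖ * ‖((2 : ℤ) : ℚ_[p])‖
        ≤ ‖(((b : ℚ) / 2 : ℚ) : ℚ_[p])‖ * 1 := by
          gcongr; exact Padic.norm_int_le_one _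
      _ < 1 := by simpa using hB
  have hpc : ¬ (p : ℤ) ∣ c := by
    intro hdvd
    have h1 : (p : ℤ) ∣ (Int.gcd a (Int.gcd b c) : ℤ) :=
      Int.dvd_coe_gcd hpa (Int.dvd_coe_gcd hpb hdvd)
    rw [hgcd] at h1
    have h2 : (p : ℤ) ≤ 1 := Int.le_of_dvd one_pos h1
    have h3 : 2 ≤ (p : ℤ) := by exact_mod_cast hp.out.two_le
    omega
  have hcnorm : ‖(c : ℤ_[p])‖ = 1 := by
    rcases lt_or_eq_of_le (PadicInt.norm_le_one (c : ℤ_[p])) with h | h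
    · exact absurd ((PadicInt.norm_int_lt_one_iff_dvd c).mp h) hpc
    · exact h
  -- set up Hensel's lemma
  obtain ⟨x₀, hcx⟩ : ∃ x₀ : ℤ_[p], (c : ℤ_[p]) * x₀ = n :=
    ⟨(c : ℤ_[p]).inv * n, by rw [← mul_assoc, PadicInt.mul_inv hcnorm, one_mul]⟩
  set F : Polynomial ℤ_[p] :=
    C α * (X ^ 3 - X) + C β * (X ^ 2 - X) + C (c : ℤ_[p]) * X - C n with hF
  have hFeval : ∀ x : ℤ_[p],
      F.eval x = α * (x ^ 3 - x) + β * (x ^ 2 - x) + (c : ℤ_[p]) * x - n := by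
    intro x
    simp only [hF, eval_sub, eval_add, eval_mul, eval_C, eval_X, eval_pow]
  have hFd : F.derivative = C α * (3 * X ^ 2 - 1) + C β * (2 * X - 1) + C (c : ℤ_[p]) := by
    simp only [hF, derivative_sub, derivative_add, derivative_mul, derivative_C,
      derivative_X, derivative_X_pow, Nat.cast_ofNat, map_ofNat]
    ring
  have hFderiv : ∀ x : ℤ_[p],
      F.derivative.eval x = α * (3 * x ^ 2 - 1) + β * (2 * x - 1) + (c : ℤ_[p]) := by
    intro x
    simp only [hFd, eval_sub, eval_add, eval_mul, eval_C, eval_X, eval_pow,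
      eval_ofNat, eval_one]
  have hsmall : ∀ t : ℤ_[p], ‖α * t‖ < 1 := by
    intro t
    calc ‖α * t‖ = ‖α‖ * ‖t‖ := norm_mul _ _
      _ ≤ ‖α‖ * 1 := by gcongr; exact PadicInt.norm_le_one t
      _ < 1 := by simpa using hαnorm
  have hsmallb : ∀ t : ℤ_[p], ‖β * t‖ < 1 := by
    intro t
    calc ‖β * t‖ = ‖β‖ * ‖t‖ := norm_mul _ _
      _ ≤ ‖β‖ * 1 := by gcongr; exact PadicInt.norm_le_one t
      _ < 1 := by simpa using hβnorm
  have hderiv_norm : ‖F.derivative.eval x₀‖ = 1 := by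
    rw [hFderiv]
    have hr : ‖α * (3 * x₀ ^ 2 - 1) + β * (2 * x₀ - 1)‖ < 1 :=
      lt_of_le_of_lt (PadicInt.nonarchimedean _ _)
        (max_lt (hsmall _) (hsmallb _))
    rw [PadicInt.norm_add_eq_max_of_ne (by rw [hcnorm]; exact hr.ne)]
    rw [hcnorm]
    exact max_eq_right hr.le
  have heval_norm : ‖F.eval x₀‖ < 1 := by
    rw [hFeval]
    have : α * (x₀ ^ 3 - x₀) + β * (x₀ ^ 2 - x₀) + (c : ℤ_[p]) * x₀ - n
        = α * (x₀ ^ 3 - x₀) + β * (x₀ ^ 2 - x₀) := by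
      rw [hcx]; ring
    rw [this]
    exact lt_of_le_of_lt (PadicInt.nonarchimedean _ _)
      (max_lt (hsmall _) (hsmallb _))
  obtain ⟨z, hz, -⟩ := hensels_lemma (F := F) (a := x₀)
    (by rw [coe_aeval_eq_eval, hderiv_norm]; simpa using heval_norm)
  refine ⟨z, ?_⟩
  rw [coe_aeval_eq_eval, hFeval] at hz
  have hz' : α * (z ^ 3 - z) + β * (z ^ 2 - z) + (c : ℤ_[p]) * z = n :=
    sub_eq_zero.mp hz
  rw [h6a, h2b]
  linear_combination (6 : ℤ_[p]) * hz'
end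

section
/- For any integers a and b ≥ 1, the number of solutions x modulo b to the congruence x² ≡ a (mod b) is at most 2^(1+ω(b/gcd(a,b))) · gcd(a,b)^[1/2], where ω(n) is the number of distinct prime factors of n and n^[1/2] denotes the largest integer whose square divides n. -/
/-- The largest integer whose square divides `n`. -/
noncomputable def sqrtPart (n : ℕ) : ℕ := sSup {d : ℕ | d ^ 2 ∣ n}

def cnt (a : ℤ) (b : ℕ) : ℕ :=
  ((Finset.range b).filter (fun x : ℕ => ((x : ℤ) ^ 2 - a) % (b : ℤ) = 0)).card

lemma le_sqrtPart {d n : ℕ} (hn : n ≠ 0) (h : d ^ 2 ∣ n) : d ≤ sqrtPart n := by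
  apply le_csSup
  · refine ⟨n, fun x hx => ?_⟩
    calc x ≤ x ^ 2 := Nat.le_self_pow two_ne_zero x
    _ ≤ n := Nat.le_of_dvd (Nat.pos_of_ne_zero hn) hx
  · exact h

lemma sqrtPart_sq_dvd {n : ℕ} (hn : n ≠ 0) : (sqrtPart n) ^ 2 ∣ n := by
  have : sqrtPart n ∈ {d : ℕ | d ^ 2 ∣ n} := by
    apply Nat.sSup_mem ⟨1, by simp⟩
    refine ⟨n, fun x hx => ?_⟩
    calc x ≤ x ^ 2 := Nat.le_self_pow two_ne_zero x
    _ ≤ n := Nat.le_of_dvd (Nat.pos_of_ne_zero hn) hx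
  exact this

lemma sqrtPart_mul_ge {m n : ℕ} (hm : m ≠ 0) (hn : n ≠ 0) :
    sqrtPart m * sqrtPart n ≤ sqrtPart (m * n) := by
  apply le_sqrtPart (Nat.mul_ne_zero hm hn)
  rw [mul_pow]
  exact mul_dvd_mul (sqrtPart_sq_dvd hm) (sqrtPart_sq_dvd hn)

lemma sq_mod_congr {m x : ℕ} (hm : 0 < m) {a : ℤ} (h : (m : ℤ) ∣ (x : ℤ) ^ 2 - a) :
    ((((x % m : ℕ)) : ℤ) ^ 2 - a) % (m : ℤ) = 0 := by
  have h1 : (m : ℤ) ∣ (x : ℤ) - ((x % m : ℕ) : ℤ) := by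
    have : (m : ℕ) ∣ x - x % m := Nat.dvd_sub_mod x
    have h2 := Int.natCast_dvd_natCast.mpr this
    rwa [Nat.cast_sub (Nat.mod_le x m)] at h2
  have h3 : (m : ℤ) ∣ (x : ℤ) ^ 2 - ((x % m : ℕ) : ℤ) ^ 2 := by
    have : (x : ℤ) ^ 2 - ((x % m : ℕ) : ℤ) ^ 2
        = ((x : ℤ) - ((x % m : ℕ) : ℤ)) * ((x : ℤ) + ((x % m : ℕ) : ℤ)) := by ring
    rw [this]; exact Dvd.dvd.mul_right h1 _
  have h4 : (m : ℤ) ∣ ((x % m : ℕ) : ℤ) ^ 2 - a := by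
    have : ((x % m : ℕ) : ℤ) ^ 2 - a = ((x : ℤ) ^ 2 - a) - ((x : ℤ) ^ 2 - ((x % m : ℕ) : ℤ) ^ 2) := by
      ring
    rw [this]; exact dvd_sub h h3
  exact Int.emod_eq_zero_of_dvd h4

lemma cnt_mul_le {a : ℤ} {m n : ℕ} (hm : 0 < m) (hn : 0 < n) (h : m.Coprime n) :
    cnt a (m * n) ≤ cnt a m * cnt a n := by
  unfold cnt
  rw [← Finset.card_product]
  apply Finset.card_le_card_of_injOn (fun x => (x % m, x % n))
  · intro x hx
    simp only [Finset.mem_coe, Finset.mem_filter, Finset.mem_range] at hx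
    obtain ⟨hxlt, hxe⟩ := hx
    have hd : ((m * n : ℕ) : ℤ) ∣ (x : ℤ) ^ 2 - a := Int.dvd_of_emod_eq_zero hxe
    have hdm : (m : ℤ) ∣ (x : ℤ) ^ 2 - a := by
      refine dvd_trans ?_ hd; exact_mod_cast Dvd.intro n rfl
    have hdn : (n : ℤ) ∣ (x : ℤ) ^ 2 - a := by
      refine dvd_trans ?_ hd; exact_mod_cast Dvd.intro_left m rfl
    simp only [Finset.mem_coe, Finset.mem_product, Finset.mem_filter, Finset.mem_range]
    exact ⟨⟨Nat.mod_lt _ hm, sq_mod_congr hm hdm⟩, ⟨Nat.mod_lt _ hn, sq_mod_congr hn hdn⟩⟩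
  · intro x hx y hy hxy
    simp only [Finset.coe_filter, Set.mem_setOf_eq, Finset.mem_range] at hx hy
    simp only [Prod.mk.injEq] at hxy
    have : x ≡ y [MOD m * n] := (Nat.modEq_and_modEq_iff_modEq_mul h).mp ⟨hxy.1, hxy.2⟩
    have := this.eq_of_lt_of_lt hx.1 hy.1
    exact this

lemma card_filter_dvd_le (d m : ℕ) (hd : 0 < d) :
    ((Finset.range (d * m)).filter (fun x => d ∣ x)).card ≤ m := by
  have := Finset.card_le_card_of_injOn (fun x => x / d)
    (s := (Finset.range (d * m)).filter (fun x => d ∣ x)) (t := Finset.range m)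
    (fun x hx => by
      simp only [Finset.mem_coe, Finset.mem_filter, Finset.mem_range] at hx ⊢
      exact Nat.div_lt_of_lt_mul (mul_comm d m ▸ hx.1))
    (fun x hx y hy hxy => by
      simp only [Finset.coe_filter, Set.mem_setOf_eq, Finset.mem_range] at hx hy
      have hx2 := Nat.div_mul_cancel hx.2
      have hy2 := Nat.div_mul_cancel hy.2
      simp only at hxy
      rw [← hx2, ← hy2, hxy])
  simpa using this

lemma card_le_of_cast_mem {q : ℕ} (hq : 0 < q) (U : Finset ℕ) (hU : ∀ z ∈ U, z < q)
    (W : Finset (ZMod q)) (hW : ∀ z ∈ U, (z : ZMod q) ∈ W) : U.card ≤ W.card := by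
  haveI : NeZero q := ⟨hq.ne'⟩
  apply Finset.card_le_card_of_injOn (fun z : ℕ => ((z : ℕ) : ZMod q)) hW
  intro x hx y hy hxy
  have h1 := ZMod.val_cast_of_lt (hU x hx)
  have h2 := ZMod.val_cast_of_lt (hU y hy)
  rw [← h1, ← h2]
  simp only at hxy
  rw [hxy]

lemma card4 {α : Type*} [DecidableEq α] (a b c d : α) : ({a, b, c, d} : Finset α).card ≤ 4 := by
  apply (Finset.card_insert_le _ _).trans
  have : ({b, c, d} : Finset α).card ≤ 3 := by
    apply (Finset.card_insert_le _ _).trans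
    have : ({c, d} : Finset α).card ≤ 2 := by
      apply (Finset.card_insert_le _ _).trans
      simp
    omega
  omega

lemma zmod_eq_of_dvd {q : ℕ} {A : ℤ} (h : (q : ℤ) ∣ A) : ((A : ℤ) : ZMod q) = 0 := by
  rcases Nat.eq_zero_or_pos q with h0 | h0
  · subst h0; simp at h; simp [h]
  · haveI : NeZero q := ⟨h0.ne'⟩
    exact (ZMod.intCast_zmod_eq_zero_iff_dvd A q).mpr h

lemma root_count {p t : ℕ} (hp : p.Prime) (ht : 0 < t) {u : ℤ} (hu : ¬ (p : ℤ) ∣ u)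
    (U : Finset ℕ) (hUlt : ∀ z ∈ U, z < p ^ t)
    (hUsq : ∀ z ∈ U, ((p : ℤ) ^ t) ∣ (z : ℤ) ^ 2 - u) :
    U.card ≤ if p = 2 then 4 else 2 := by
  have hq0 : 0 < p ^ t := pow_pos hp.pos t
  rcases U.eq_empty_or_nonempty with hU | ⟨z₀, hz₀⟩
  · simp only [hU, Finset.card_empty]; split <;> norm_num
  have hz₀lt := hUlt z₀ hz₀
  have hz₀sq := hUsq z₀ hz₀
  -- every z in U: p^t ∣ (z - z₀)(z + z₀)
  have key : ∀ z ∈ U, ((p : ℤ) ^ t) ∣ ((z : ℤ) - z₀) * ((z : ℤ) + z₀) := by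
    intro z hz
    have h1 := hUsq z hz
    have : ((z : ℤ) - z₀) * ((z : ℤ) + z₀) = ((z : ℤ) ^ 2 - u) - ((z₀ : ℤ) ^ 2 - u) := by ring
    rw [this]; exact dvd_sub h1 hz₀sq
  -- no element of U is divisible by p
  have hUnd : ∀ z ∈ U, ¬ (p : ℤ) ∣ (z : ℤ) := by
    intro z hz hdz
    apply hu
    have h1 : (p : ℤ) ∣ (z : ℤ) ^ 2 := by
      rw [sq]; exact hdz.mul_right _
    have h2 : (p : ℤ) ∣ (z : ℤ) ^ 2 - u :=
      dvd_trans (dvd_pow_self (p : ℤ) ht.ne') (hUsq z hz)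
    have : u = (z : ℤ) ^ 2 - ((z : ℤ) ^ 2 - u) := by ring
    rw [this]; exact dvd_sub h1 h2
  by_cases hp2 : p = 2
  · subst hp2
    have hgoal : (if (2:ℕ) = 2 then 4 else 2) = 4 := by norm_num
    rw [hgoal]
    rcases Nat.lt_or_ge t 2 with ht2 | ht2
    · -- t = 1 : trivial since q = 2
      have : U.card ≤ 2 := by
        have h1 : U ⊆ Finset.range (2 ^ t) := fun z hz => Finset.mem_range.mpr (hUlt z hz)
        calc U.card ≤ (Finset.range (2 ^ t)).card := Finset.card_le_card h1
        _ = 2 ^ t := Finset.card_range _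
        _ ≤ 2 := by interval_cases t <;> norm_num
      omega
    · set q := 2 ^ t with hqdef
      set h : ℕ := 2 ^ (t - 1) with hdef
      have hq2h : q = 2 * h := by
        rw [hqdef, hdef, ← pow_succ']
        congr 1; omega
      refine (card_le_of_cast_mem hq0 U hUlt
        ({(z₀ : ZMod q), (z₀ : ZMod q) + (h : ZMod q), -(z₀ : ZMod q),
          -(z₀ : ZMod q) + (h : ZMod q)}) ?_).trans (card4 _ _ _ _)
      intro z hz
      -- derive: (h : ℤ) ∣ z - z₀ or h ∣ z + z₀
      have hodd : ∀ w ∈ U, ∃ c : ℤ, (w : ℤ) = 2 * c + 1 := by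
        intro w hw
        have h2w := hUnd w hw
        have h2w' : ¬ (2 : ℤ) ∣ (w : ℤ) := by exact_mod_cast h2w
        exact ⟨((w : ℤ) - 1) / 2, by omega⟩
      obtain ⟨cz, hcz⟩ := hodd z hz
      obtain ⟨cz₀, hcz₀⟩ := hodd z₀ hz₀
      -- z - z₀ = 2 α, z + z₀ = 2 β, α + β odd
      set α : ℤ := cz - cz₀ with hα
      set β : ℤ := cz + cz₀ + 1 with hβ
      have hzz1 : (z : ℤ) - z₀ = 2 * α := by rw [hα, hcz, hcz₀]; ring
      have hzz2 : (z : ℤ) + z₀ = 2 * β := by rw [hβ, hcz, hcz₀]; ring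
      have hδ : α + β = 2 * cz + 1 := by rw [hα, hβ]; ring
      obtain ⟨c, hc⟩ := key z hz
      have hc4 : (2:ℤ) ^ (t - 2) ∣ α * β := by
        refine ⟨c, ?_⟩
        have h4 : (4 : ℤ) * (α * β) = 4 * (2 ^ (t - 2) * c) := by
          have ht' : (2:ℤ) ^ t = 4 * 2 ^ (t - 2) := by
            rw [show t = 2 + (t - 2) by omega, pow_add]; norm_num
          calc (4 : ℤ) * (α * β) = ((z : ℤ) - z₀) * ((z : ℤ) + z₀) := by
                rw [hzz1, hzz2]; ring
          _ = (2:ℤ) ^ t * c := hc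
          _ = 4 * (2 ^ (t - 2) * c) := by rw [ht']; ring
        have := mul_left_cancel₀ (by norm_num : (4:ℤ) ≠ 0) h4
        linarith [this]
      have hdisj : (2:ℤ) ^ (t - 1) ∣ (z : ℤ) - z₀ ∨ (2:ℤ) ^ (t - 1) ∣ (z : ℤ) + z₀ := by
        rcases Int.even_or_odd α with hae | hao
        · -- α even ⇒ β odd ⇒ 2^(t-2) ∣ α
          have hbo : ¬ (2:ℤ) ∣ β := by
            rcases hae with ⟨a2, ha2⟩
            intro ⟨b2, hb2⟩
            omega
          have hcop : IsCoprime ((2:ℤ) ^ (t - 2)) β :=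
            (((Int.prime_two).coprime_iff_not_dvd).mpr hbo).pow_left
          have : (2:ℤ) ^ (t - 2) ∣ α := hcop.dvd_of_dvd_mul_right hc4
          left
          rw [hzz1, show t - 1 = 1 + (t - 2) by omega, pow_add, pow_one]
          exact mul_dvd_mul_left 2 this
        · have hao' : ¬ (2:ℤ) ∣ α := by
            rcases hao with ⟨a2, ha2⟩
            intro ⟨b2, hb2⟩
            omega
          have hcop : IsCoprime ((2:ℤ) ^ (t - 2)) α :=
            (((Int.prime_two).coprime_iff_not_dvd).mpr hao').pow_left
          have : (2:ℤ) ^ (t - 2) ∣ β := hcop.dvd_of_dvd_mul_left hc4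
          right
          rw [hzz2, show t - 1 = 1 + (t - 2) by omega, pow_add, pow_one]
          exact mul_dvd_mul_left 2 this
      -- now translate to ZMod q
      have hqz : ∀ A : ℤ, (q : ℤ) ∣ A → ((A : ℤ) : ZMod q) = 0 := fun A hA => zmod_eq_of_dvd hA
      have hhq : ((h : ℕ) : ℤ) = 2 ^ (t - 1) := by rw [hdef]; push_cast; ring
      simp only [Finset.mem_insert, Finset.mem_singleton]
      rcases hdisj with hd | hd
      · obtain ⟨c, hc⟩ := hhq.symm ▸ hd
        rcases Int.even_or_odd c with ⟨d, hd2⟩ | ⟨d, hd2⟩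
        · left
          have : (q : ℤ) ∣ (z : ℤ) - z₀ := ⟨d, by rw [hc, hd2]; push_cast [hq2h, hdef]; ring⟩
          have h0 := hqz _ this
          push_cast at h0
          linear_combination (exp := 1) h0
        · right; left
          have : (q : ℤ) ∣ (z : ℤ) - z₀ - h := ⟨d, by rw [hc, hd2]; push_cast [hq2h, hdef]; ring⟩
          have h0 := hqz _ this
          push_cast at h0
          linear_combination (exp := 1) h0
      · obtain ⟨c, hc⟩ := hhq.symm ▸ hd
        rcases Int.even_or_odd c with ⟨d, hd2⟩ | ⟨d, hd2⟩
        · right; right; left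
          have : (q : ℤ) ∣ (z : ℤ) + z₀ := ⟨d, by rw [hc, hd2]; push_cast [hq2h, hdef]; ring⟩
          have h0 := hqz _ this
          push_cast at h0
          linear_combination (exp := 1) h0
        · right; right; right
          have : (q : ℤ) ∣ (z : ℤ) + z₀ - h := ⟨d, by rw [hc, hd2]; push_cast [hq2h, hdef]; ring⟩
          have h0 := hqz _ this
          push_cast at h0
          linear_combination (exp := 1) h0
  · -- odd prime
    simp only [if_neg hp2]
    set q := p ^ t with hqdef
    refine (card_le_of_cast_mem hq0 U hUlt ({(z₀ : ZMod q), -(z₀ : ZMod q)}) ?_).trans ?_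
    swap
    · exact (Finset.card_insert_le _ _).trans (by simp)
    intro z hz
    have hkey := key z hz
    have hnot : ¬ ((p:ℤ) ∣ (z : ℤ) - z₀ ∧ (p:ℤ) ∣ (z : ℤ) + z₀) := by
      rintro ⟨h1, h2⟩
      have h3 : (p : ℤ) ∣ 2 * z₀ := by
        have : (2 : ℤ) * z₀ = ((z : ℤ) + z₀) - ((z : ℤ) - z₀) := by ring
        rw [this]; exact dvd_sub h2 h1
      have hpz : Prime (p : ℤ) := (Int.prime_iff_natAbs_prime.mpr (by simpa using hp))
      rcases hpz.dvd_mul.mp h3 with h4 | h4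
      · have : (p : ℕ) ∣ 2 := by exact_mod_cast h4
        have := (Nat.prime_dvd_prime_iff_eq hp Nat.prime_two).mp this
        exact hp2 this
      · exact hUnd z₀ hz₀ h4
    have hdisj : (q : ℤ) ∣ (z : ℤ) - z₀ ∨ (q : ℤ) ∣ (z : ℤ) + z₀ := by
      have hpz : Prime (p : ℤ) := (Int.prime_iff_natAbs_prime.mpr (by simpa using hp))
      have hkey' : ((p : ℤ) ^ t) ∣ ((z : ℤ) - z₀) * ((z : ℤ) + z₀) := hkey
      by_cases h1 : (p : ℤ) ∣ (z : ℤ) - z₀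
      · left
        have h2 : ¬ (p : ℤ) ∣ (z : ℤ) + z₀ := fun h => hnot ⟨h1, h⟩
        have hcop : IsCoprime ((p:ℤ) ^ t) ((z : ℤ) + z₀) :=
          ((hpz.coprime_iff_not_dvd).mpr h2).pow_left
        have := hcop.dvd_of_dvd_mul_left (by rw [mul_comm] at hkey'; exact hkey')
        rw [hqdef]; push_cast; exact this
      · right
        have hcop : IsCoprime ((p:ℤ) ^ t) ((z : ℤ) - z₀) :=
          ((hpz.coprime_iff_not_dvd).mpr h1).pow_left
        have := hcop.dvd_of_dvd_mul_left hkey'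
        rw [hqdef]; push_cast; exact this
    simp only [Finset.mem_insert, Finset.mem_singleton]
    rcases hdisj with hd | hd
    · left
      have h0 := zmod_eq_of_dvd hd
      push_cast at h0
      linear_combination (exp := 1) h0
    · right
      have h0 := zmod_eq_of_dvd hd
      push_cast at h0
      linear_combination (exp := 1) h0

lemma pow_dvd_of_dvd_sq {p e x : ℕ} (hp : p.Prime) (h : p ^ e ∣ x ^ 2) :
    p ^ ((e + 1) / 2) ∣ x := by
  rcases Nat.eq_zero_or_pos x with rfl | hx
  · exact dvd_zero _
  have hx2 : x ^ 2 ≠ 0 := pow_ne_zero _ hx.ne'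
  have h1 : e ≤ (x ^ 2).factorization p := (hp.pow_dvd_iff_le_factorization hx2).mp h
  rw [Nat.factorization_pow] at h1
  simp only [Finsupp.smul_apply, smul_eq_mul] at h1
  have h2 : (e + 1) / 2 ≤ x.factorization p := by omega
  calc p ^ ((e + 1) / 2) ∣ p ^ (x.factorization p) := pow_dvd_pow _ h2
  _ ∣ x := Nat.ordProj_dvd x p

lemma cnt_prime_pow (p e : ℕ) (hp : p.Prime) (he : 0 < e) (a : ℤ) :
    cnt a (p ^ e) ≤ (if 2 ∣ p ^ e then 2 else 1) *
      (2 ^ ((p ^ e / Int.gcd a ((p ^ e : ℕ) : ℤ)).primeFactors.card) *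
        sqrtPart (Int.gcd a ((p ^ e : ℕ) : ℤ))) := by
  have hppos : 0 < p := hp.pos
  have hqpos : 0 < p ^ e := pow_pos hppos e
  have hgcd_eq : Int.gcd a ((p ^ e : ℕ) : ℤ) = Nat.gcd a.natAbs (p ^ e) := by
    rw [Int.gcd]; simp [Int.natAbs_pow]
  by_cases hA : ((p ^ e : ℕ) : ℤ) ∣ a
  · -- Case A : p^e ∣ a
    have hg : Int.gcd a ((p ^ e : ℕ) : ℤ) = p ^ e := by
      rw [hgcd_eq]
      exact Nat.gcd_eq_right (Int.natCast_dvd.mp hA)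
    rw [hg, Nat.div_self hqpos]
    simp only [Nat.primeFactors_one, Finset.card_empty, pow_zero, one_mul]
    have hsub : (Finset.range (p ^ e)).filter
        (fun x : ℕ => ((x : ℤ) ^ 2 - a) % ((p ^ e : ℕ) : ℤ) = 0) ⊆
        (Finset.range (p ^ ((e + 1) / 2) * p ^ (e / 2))).filter
          (fun x => p ^ ((e + 1) / 2) ∣ x) := by
      intro x hx
      simp only [Finset.mem_filter, Finset.mem_range] at hx ⊢
      obtain ⟨hlt, hsq⟩ := hx
      refine ⟨by rwa [← pow_add, show (e + 1) / 2 + e / 2 = e by omega], ?_⟩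
      have h1 : ((p ^ e : ℕ) : ℤ) ∣ (x : ℤ) ^ 2 := by
        have h2 := dvd_add (Int.dvd_of_emod_eq_zero hsq) hA
        simpa using h2
      have h3 : p ^ e ∣ x ^ 2 := by exact_mod_cast h1
      exact pow_dvd_of_dvd_sq hp h3
    calc cnt a (p ^ e) ≤ _ := Finset.card_le_card hsub
    _ ≤ p ^ (e / 2) := card_filter_dvd_le _ _ (pow_pos hppos _)
    _ ≤ sqrtPart (p ^ e) := by
        apply le_sqrtPart hqpos.ne'
        rw [← pow_mul]
        exact pow_dvd_pow p (by omega)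
    _ ≤ (if 2 ∣ p ^ e then 2 else 1) * sqrtPart (p ^ e) :=
        Nat.le_mul_of_pos_left _ (by split <;> norm_num)
  · -- Case B : p^e ∤ a
    have ha0 : a ≠ 0 := fun h => hA (h ▸ dvd_zero _)
    have hA' : ¬ p ^ e ∣ a.natAbs := fun h => hA (Int.natCast_dvd.mpr h)
    have haA : a.natAbs ≠ 0 := Int.natAbs_ne_zero.mpr ha0
    set k := a.natAbs.factorization p with hk
    have hke : k < e := by
      by_contra h
      exact hA' ((pow_dvd_pow p (by omega)).trans (Nat.ordProj_dvd _ _))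
    have hpk_dvd : p ^ k ∣ a.natAbs := Nat.ordProj_dvd _ _
    have hpk1_not : ¬ p ^ (k + 1) ∣ a.natAbs := by
      intro h
      have := (hp.pow_dvd_iff_le_factorization haA).mp h
      omega
    have hg : Int.gcd a ((p ^ e : ℕ) : ℤ) = p ^ k := by
      rw [hgcd_eq]
      apply Nat.dvd_antisymm
      · have hd : Nat.gcd a.natAbs (p ^ e) ∣ p ^ e := Nat.gcd_dvd_right _ _
        obtain ⟨i, hie, hi⟩ := (Nat.dvd_prime_pow hp).mp hd
        rw [hi]
        apply pow_dvd_pow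
        have : p ^ i ∣ a.natAbs := hi ▸ Nat.gcd_dvd_left _ _
        exact (hp.pow_dvd_iff_le_factorization haA).mp this
      · exact Nat.dvd_gcd hpk_dvd (pow_dvd_pow p hke.le)
    -- k must be even (else no solutions)
    by_cases hkodd : k % 2 = 1
    · -- odd valuation: no solutions
      have hempty : (Finset.range (p ^ e)).filter
          (fun x : ℕ => ((x : ℤ) ^ 2 - a) % ((p ^ e : ℕ) : ℤ) = 0) = ∅ := by
        apply Finset.eq_empty_of_forall_notMem
        intro x hx
        simp only [Finset.mem_filter, Finset.mem_range] at hx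
        obtain ⟨hlt, hsq⟩ := hx
        have hde : ((p ^ e : ℕ) : ℤ) ∣ (x : ℤ) ^ 2 - a := Int.dvd_of_emod_eq_zero hsq
        have hdk : ((p ^ k : ℕ) : ℤ) ∣ (x : ℤ) ^ 2 - a :=
          dvd_trans (Int.natCast_dvd_natCast.mpr (pow_dvd_pow p hke.le)) hde
        have hdka : ((p ^ k : ℕ) : ℤ) ∣ a := Int.natCast_dvd.mpr hpk_dvd
        have hdx2 : p ^ k ∣ x ^ 2 := by
          have : ((p ^ k : ℕ) : ℤ) ∣ (x : ℤ) ^ 2 := by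
            have h2 := dvd_add hdk hdka
            simpa using h2
          exact_mod_cast this
        have hdx : p ^ ((k + 1) / 2) ∣ x := pow_dvd_of_dvd_sq hp hdx2
        have hdx2' : p ^ (k + 1) ∣ x ^ 2 := by
          have := pow_dvd_pow_of_dvd hdx 2
          rwa [← pow_mul, show (k + 1) / 2 * 2 = k + 1 by omega] at this
        have hda : p ^ (k + 1) ∣ a.natAbs := by
          have h1 : ((p ^ (k + 1) : ℕ) : ℤ) ∣ (x : ℤ) ^ 2 - a :=
            dvd_trans (Int.natCast_dvd_natCast.mpr (pow_dvd_pow p (by omega))) hde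
          have h2 : ((p ^ (k + 1) : ℕ) : ℤ) ∣ (x : ℤ) ^ 2 := by exact_mod_cast hdx2'
          have h3 : ((p ^ (k + 1) : ℕ) : ℤ) ∣ a := by
            have := dvd_sub h2 h1
            simpa using this
          exact Int.natCast_dvd.mp h3
        exact hpk1_not hda
      unfold cnt
      rw [hempty]
      simp
    · -- k = 2j
      have hkeven : k % 2 = 0 := by omega
      set j := k / 2 with hj
      have hk2j : k = 2 * j := by omega
      -- u = a / p^(2j)
      have hpk_dvd' : ((p : ℤ) ^ k) ∣ a := by
        have := Int.natCast_dvd.mpr hpk_dvd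
        push_cast at this
        exact this
      set u : ℤ := a / (p : ℤ) ^ k with hu_def
      have ha_eq : a = (p : ℤ) ^ k * u := (Int.mul_ediv_cancel' hpk_dvd').symm
      have hu : ¬ (p : ℤ) ∣ u := by
        intro hdu
        apply hpk1_not
        apply Int.natCast_dvd.mp
        push_cast
        rw [ha_eq, pow_succ]
        exact mul_dvd_mul_left _ hdu
      set t := e - 2 * j with ht_def
      have ht : 0 < t := by omega
      -- the target finset of pairs
      set W : Finset ℕ := (Finset.range (p ^ t)).filter
        (fun z : ℕ => ((z : ℤ) ^ 2 - u) % ((p ^ t : ℕ) : ℤ) = 0) with hW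
      have hWcard : W.card ≤ if p = 2 then 4 else 2 := by
        apply root_count hp ht hu
        · intro z hz
          rw [hW] at hz
          simp only [Finset.mem_filter, Finset.mem_range] at hz
          exact hz.1
        · intro z hz
          rw [hW] at hz
          simp only [Finset.mem_filter, Finset.mem_range] at hz
          have := Int.dvd_of_emod_eq_zero hz.2
          push_cast at this ⊢
          exact this
      -- injection from solutions into W ×ˢ range (p^j)
      have hmain : cnt a (p ^ e) ≤ W.card * p ^ j := by
        rw [← Finset.card_range (p ^ j), ← Finset.card_product]
        apply Finset.card_le_card_of_injOn
          (fun x => ((x / p ^ j) % p ^ t, (x / p ^ j) / p ^ t))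
        · intro x hx
          simp only [Finset.mem_coe, Finset.mem_filter, Finset.mem_range] at hx
          obtain ⟨hlt, hsq⟩ := hx
          have hde : ((p ^ e : ℕ) : ℤ) ∣ (x : ℤ) ^ 2 - a := Int.dvd_of_emod_eq_zero hsq
          -- p^j ∣ x
          have hdx2 : p ^ k ∣ x ^ 2 := by
            have hdk : ((p ^ k : ℕ) : ℤ) ∣ (x : ℤ) ^ 2 - a :=
              dvd_trans (Int.natCast_dvd_natCast.mpr (pow_dvd_pow p hke.le)) hde
            have : ((p ^ k : ℕ) : ℤ) ∣ (x : ℤ) ^ 2 := by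
              have h2 := dvd_add hdk (Int.natCast_dvd.mpr hpk_dvd)
              simpa using h2
            exact_mod_cast this
          have hdx : p ^ j ∣ x := by
            have := pow_dvd_of_dvd_sq hp hdx2
            rwa [show (k + 1) / 2 = j by omega] at this
          set y := x / p ^ j with hy
          have hxy : x = p ^ j * y := (Nat.mul_div_cancel' hdx).symm
          have hylt : y < p ^ (t + j) := by
            apply Nat.div_lt_of_lt_mul
            rwa [← pow_add, show j + (t + j) = e by omega]
          -- divisibility for y
          have hyd : ((p : ℤ) ^ t) ∣ (y : ℤ) ^ 2 - u := by
            have h1 : (p : ℤ) ^ (2 * j) * ((y : ℤ) ^ 2 - u) = (x : ℤ) ^ 2 - a := by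
              rw [ha_eq, hk2j]
              have : (x : ℤ) = (p : ℤ) ^ j * (y : ℤ) := by rw [hxy]; push_cast; ring
              rw [this]; ring
            have h2 : (p : ℤ) ^ (2 * j) * (p : ℤ) ^ t ∣ (p : ℤ) ^ (2 * j) * ((y : ℤ) ^ 2 - u) := by
              rw [h1, ← pow_add, show 2 * j + t = e by omega]
              push_cast at hde ⊢
              exact hde
            exact (mul_dvd_mul_iff_left (a := (p : ℤ) ^ (2 * j))
              (pow_ne_zero _ (by exact_mod_cast hppos.ne'))).mp h2
          -- membership
          simp only [Finset.mem_coe, Finset.mem_product, Finset.mem_range, hW, Finset.mem_filter]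
          refine ⟨⟨Nat.mod_lt _ (pow_pos hppos t), ?_⟩, ?_⟩
          · -- (y % p^t)^2 ≡ u
            apply Int.emod_eq_zero_of_dvd
            have hzy : ((p ^ t : ℕ) : ℤ) ∣ ((y : ℤ) - ((y % p ^ t : ℕ) : ℤ)) := by
              have : (p ^ t : ℕ) ∣ y - y % p ^ t := Nat.dvd_sub_mod y
              have h2 := Int.natCast_dvd_natCast.mpr this
              rwa [Nat.cast_sub (Nat.mod_le y _)] at h2
            have hzy2 : ((p ^ t : ℕ) : ℤ) ∣ ((y : ℤ) ^ 2 - ((y % p ^ t : ℕ) : ℤ) ^ 2) := by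
              have heq : (y : ℤ) ^ 2 - ((y % p ^ t : ℕ) : ℤ) ^ 2
                  = ((y : ℤ) - ((y % p ^ t : ℕ) : ℤ)) * ((y : ℤ) + ((y % p ^ t : ℕ) : ℤ)) := by
                ring
              rw [heq]; exact hzy.mul_right _
            have hyd' : ((p ^ t : ℕ) : ℤ) ∣ (y : ℤ) ^ 2 - u := by push_cast; exact hyd
            have heq2 : ((y % p ^ t : ℕ) : ℤ) ^ 2 - u
                = ((y : ℤ) ^ 2 - u) - ((y : ℤ) ^ 2 - ((y % p ^ t : ℕ) : ℤ) ^ 2) := by ring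
            rw [heq2]
            exact dvd_sub hyd' hzy2
          · -- y / p^t < p^j
            apply Nat.div_lt_of_lt_mul
            rw [← pow_add]
            exact hylt
        · -- injectivity
          intro x hx x' hx' hxx
          simp only [Finset.coe_filter, Set.mem_setOf_eq, Finset.mem_range] at hx hx'
          simp only [Prod.mk.injEq] at hxx
          -- recover x from the pair, using p^j ∣ x
          have hrec : ∀ w : ℕ, w ∈ (Finset.range (p ^ e)).filter
              (fun x : ℕ => ((x : ℤ) ^ 2 - a) % ((p ^ e : ℕ) : ℤ) = 0) → p ^ j ∣ w := by
            intro w hw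
            simp only [Finset.mem_filter, Finset.mem_range] at hw
            have hde : ((p ^ e : ℕ) : ℤ) ∣ (w : ℤ) ^ 2 - a := Int.dvd_of_emod_eq_zero hw.2
            have hdx2 : p ^ k ∣ w ^ 2 := by
              have hdk : ((p ^ k : ℕ) : ℤ) ∣ (w : ℤ) ^ 2 - a :=
                dvd_trans (Int.natCast_dvd_natCast.mpr (pow_dvd_pow p hke.le)) hde
              have : ((p ^ k : ℕ) : ℤ) ∣ (w : ℤ) ^ 2 := by
                have h2 := dvd_add hdk (Int.natCast_dvd.mpr hpk_dvd)
                simpa using h2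
              exact_mod_cast this
            have := pow_dvd_of_dvd_sq hp hdx2
            rwa [show (k + 1) / 2 = j by omega] at this
          have hdx : p ^ j ∣ x := hrec x (by simpa using hx)
          have hdx' : p ^ j ∣ x' := hrec x' (by simpa using hx')
          have h1 : x / p ^ j = x' / p ^ j := by
            conv_lhs => rw [← Nat.div_add_mod (x / p ^ j) (p ^ t)]
            conv_rhs => rw [← Nat.div_add_mod (x' / p ^ j) (p ^ t)]
            rw [hxx.1, hxx.2]
          calc x = p ^ j * (x / p ^ j) := (Nat.mul_div_cancel' hdx).symm
          _ = p ^ j * (x' / p ^ j) := by rw [h1]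
          _ = x' := Nat.mul_div_cancel' hdx'
      -- assemble
      rw [hg]
      have hdivg : p ^ e / p ^ k = p ^ t := by
        rw [Nat.pow_div (by omega) hppos]
        congr 1
        omega
      rw [hdivg]
      have hpf : (p ^ t).primeFactors.card = 1 := by
        rw [Nat.primeFactors_pow p ht.ne', hp.primeFactors]
        simp
      rw [hpf]
      have hsp : p ^ j ≤ sqrtPart (p ^ k) := by
        apply le_sqrtPart (pow_pos hppos k).ne'
        rw [← pow_mul, hk2j, mul_comm]
      have hif : (if p = 2 then 4 else 2) = (if 2 ∣ p ^ e then 2 else 1) * 2 := by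
        by_cases hp2 : p = 2
        · subst hp2
          rw [if_pos rfl, if_pos (dvd_pow_self 2 he.ne')]
        · rw [if_neg hp2, if_neg]
          intro h2
          exact hp2 ((Nat.prime_dvd_prime_iff_eq Nat.prime_two hp).mp
            (Nat.Prime.dvd_of_dvd_pow Nat.prime_two h2)).symm
      calc cnt a (p ^ e) ≤ W.card * p ^ j := hmain
      _ ≤ (if p = 2 then 4 else 2) * p ^ j := Nat.mul_le_mul_right _ hWcard
      _ = (if 2 ∣ p ^ e then 2 else 1) * (2 * p ^ j) := by rw [hif]; ring
      _ ≤ (if 2 ∣ p ^ e then 2 else 1) * (2 ^ 1 * sqrtPart (p ^ k)) := by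
          apply Nat.mul_le_mul_left
          rw [pow_one]
          exact Nat.mul_le_mul_left _ hsp

lemma key : ∀ (b : ℕ) (a : ℤ), cnt a b ≤ (if 2 ∣ b then 2 else 1) *
    (2 ^ ((b / Int.gcd a (b : ℤ)).primeFactors.card) * sqrtPart (Int.gcd a (b : ℤ))) := by
  intro b
  induction b using Nat.recOnPosPrimePosCoprime with
  | prime_pow p e hp he =>
    intro a
    exact cnt_prime_pow p e hp he a
  | zero =>
    intro a
    simp [cnt]
  | one =>
    intro a
    have h1 : cnt a 1 ≤ 1 := by
      unfold cnt
      calc _ ≤ (Finset.range 1).card := Finset.card_filter_le _ _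
      _ = 1 := Finset.card_range 1
    have h2 : Int.gcd a ((1 : ℕ) : ℤ) = 1 := by simp [Int.gcd]
    rw [h2]
    simp only [Nat.div_one, Nat.primeFactors_one, Finset.card_empty, pow_zero, one_mul]
    have h3 : 1 ≤ sqrtPart 1 := le_sqrtPart one_ne_zero (by norm_num)
    calc cnt a 1 ≤ 1 := h1
    _ ≤ sqrtPart 1 := h3
    _ ≤ _ := Nat.le_mul_of_pos_left _ (by split <;> norm_num)
  | coprime m n hm hn hco ihm ihn =>
    intro a
    have hm0 : 0 < m := by omega
    have hn0 : 0 < n := by omega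
    set A := a.natAbs with hA
    have hgm : Int.gcd a ((m : ℕ) : ℤ) = Nat.gcd A m := by rw [Int.gcd]; simp [hA]
    have hgn : Int.gcd a ((n : ℕ) : ℤ) = Nat.gcd A n := by rw [Int.gcd]; simp [hA]
    have hgmn : Int.gcd a ((m * n : ℕ) : ℤ) = Nat.gcd A m * Nat.gcd A n := by
      rw [Int.gcd]
      simpa [hA, Int.natAbs_mul] using Nat.Coprime.gcd_mul A hco
    have hg1pos : 0 < Nat.gcd A m := Nat.gcd_pos_of_pos_right _ hm0
    have hg2pos : 0 < Nat.gcd A n := Nat.gcd_pos_of_pos_right _ hn0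
    have hg1dvd : Nat.gcd A m ∣ m := Nat.gcd_dvd_right _ _
    have hg2dvd : Nat.gcd A n ∣ n := Nat.gcd_dvd_right _ _
    have hdiv : m * n / (Nat.gcd A m * Nat.gcd A n) = (m / Nat.gcd A m) * (n / Nat.gcd A n) :=
      (Nat.div_mul_div_comm hg1dvd hg2dvd).symm
    have hqm : m / Nat.gcd A m ∣ m := Nat.div_dvd_of_dvd hg1dvd
    have hqn : n / Nat.gcd A n ∣ n := Nat.div_dvd_of_dvd hg2dvd
    have hcoq : (m / Nat.gcd A m).Coprime (n / Nat.gcd A n) :=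
      Nat.Coprime.coprime_dvd_left hqm (Nat.Coprime.coprime_dvd_right hqn hco)
    have hcard : ((m / Nat.gcd A m) * (n / Nat.gcd A n)).primeFactors.card
        = (m / Nat.gcd A m).primeFactors.card + (n / Nat.gcd A n).primeFactors.card := by
      rw [hcoq.primeFactors_mul]
      exact Finset.card_union_of_disjoint (Nat.Coprime.disjoint_primeFactors hcoq)
    have hif : (if 2 ∣ m * n then 2 else 1) = (if 2 ∣ m then 2 else 1) * (if 2 ∣ n then 2 else 1) := by
      by_cases hm2 : 2 ∣ m
      · have hn2 : ¬ 2 ∣ n := by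
          intro hn2
          have h2 : (2 : ℕ) ∣ Nat.gcd m n := Nat.dvd_gcd hm2 hn2
          rw [hco] at h2
          omega
        rw [if_pos hm2, if_neg hn2, if_pos (hm2.mul_right n)]
      · by_cases hn2 : 2 ∣ n
        · rw [if_neg hm2, if_pos hn2, if_pos (hn2.mul_left m)]
        · rw [if_neg hm2, if_neg hn2, if_neg]
          simp only [Nat.Prime.dvd_mul Nat.prime_two]
          tauto
    calc cnt a (m * n) ≤ cnt a m * cnt a n := cnt_mul_le hm0 hn0 hco
    _ ≤ ((if 2 ∣ m then 2 else 1) *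
          (2 ^ ((m / Int.gcd a (m : ℤ)).primeFactors.card) * sqrtPart (Int.gcd a (m : ℤ)))) *
        ((if 2 ∣ n then 2 else 1) *
          (2 ^ ((n / Int.gcd a (n : ℤ)).primeFactors.card) * sqrtPart (Int.gcd a (n : ℤ)))) :=
        Nat.mul_le_mul (ihm a) (ihn a)
    _ = (if 2 ∣ m * n then 2 else 1) *
        (2 ^ ((m / Nat.gcd A m).primeFactors.card + (n / Nat.gcd A n).primeFactors.card) *
          (sqrtPart (Nat.gcd A m) * sqrtPart (Nat.gcd A n))) := by
        rw [hif, hgm, hgn, pow_add]; ring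
    _ ≤ (if 2 ∣ m * n then 2 else 1) *
        (2 ^ (((m * n) / Int.gcd a ((m * n : ℕ) : ℤ)).primeFactors.card) *
          sqrtPart (Int.gcd a ((m * n : ℕ) : ℤ))) := by
        apply Nat.mul_le_mul_left
        rw [hgmn, hdiv, hcard]
        exact Nat.mul_le_mul_left _ (sqrtPart_mul_ge hg1pos.ne' hg2pos.ne')

theorem stmt_4 (a : ℤ) (b : ℕ) (hb : 1 ≤ b) :
    ((Finset.range b).filter
        (fun x : ℕ => ((x : ℤ) ^ 2 - a) % (b : ℤ) = 0)).card
      ≤ 2 ^ (1 + (b / Int.gcd a b).primeFactors.card) * sqrtPart (Int.gcd a b) := by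
  have h := key b a
  have h2 : (if 2 ∣ b then 2 else 1) ≤ 2 := by split <;> norm_num
  calc ((Finset.range b).filter
        (fun x : ℕ => ((x : ℤ) ^ 2 - a) % (b : ℤ) = 0)).card = cnt a b := rfl
  _ ≤ (if 2 ∣ b then 2 else 1) *
      (2 ^ ((b / Int.gcd a (b : ℤ)).primeFactors.card) * sqrtPart (Int.gcd a (b : ℤ))) := h
  _ ≤ 2 * (2 ^ ((b / Int.gcd a (b : ℤ)).primeFactors.card) * sqrtPart (Int.gcd a (b : ℤ))) :=
      Nat.mul_le_mul_right _ h2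
  _ = 2 ^ (1 + (b / Int.gcd a b).primeFactors.card) * sqrtPart (Int.gcd a b) := by
      rw [pow_add, pow_one]; ring
end

section
/- For all real x ≥ 1 (or all positive integers n) and every positive integer k, the sum Σ_{x ≤ n} τ(x)^k / x ≤ (log(e·n))^(2^k), where τ is the divisor function. -/
open Finset

lemma tau_submul (a b : ℕ) (ha : a ≠ 0) (hb : b ≠ 0) :
    ((a * b).divisors.card : ℕ) ≤ a.divisors.card * b.divisors.card := by
  rw [← Finset.card_product]
  apply Finset.card_le_card_of_injOn (fun d => (Nat.gcd d a, d / Nat.gcd d a))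
  · intro d hd
    rw [Finset.mem_coe, Nat.mem_divisors] at hd
    obtain ⟨hdvd, hab⟩ := hd
    have hd0 : d ≠ 0 := by rintro rfl; exact hab (zero_dvd_iff.mp hdvd)
    have hg : 0 < Nat.gcd d a := Nat.gcd_pos_of_pos_left a (Nat.pos_of_ne_zero hd0)
    simp only [Finset.mem_coe, Finset.mem_product, Nat.mem_divisors]
    refine ⟨⟨Nat.gcd_dvd_right d a, ha⟩, ?_, hb⟩
    have hco : Nat.Coprime (d / Nat.gcd d a) (a / Nat.gcd d a) :=
      Nat.coprime_div_gcd_div_gcd hg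
    have h1 : d ∣ (a / Nat.gcd d a) * Nat.gcd d a * b := by
      rwa [Nat.div_mul_cancel (Nat.gcd_dvd_right d a)]
    have h2 : d / Nat.gcd d a * Nat.gcd d a ∣ (a / Nat.gcd d a * b) * Nat.gcd d a := by
      rw [Nat.div_mul_cancel (Nat.gcd_dvd_left d a)]
      rw [mul_right_comm] at h1
      exact h1
    exact hco.dvd_of_dvd_mul_left ((Nat.mul_dvd_mul_iff_right hg).mp h2)
  · intro x hx y hy hxy
    have hx0 : x ≠ 0 := (Nat.pos_of_mem_divisors (Finset.mem_coe.mp hx)).ne'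
    have hy0 : y ≠ 0 := (Nat.pos_of_mem_divisors (Finset.mem_coe.mp hy)).ne'
    have := congrArg (fun p : ℕ × ℕ => p.1 * p.2) hxy
    simpa [Nat.mul_div_cancel' (Nat.gcd_dvd_left x a),
      Nat.mul_div_cancel' (Nat.gcd_dvd_left y a)] using this

lemma card_DA (x : ℕ) : x.divisorsAntidiagonal.card = x.divisors.card := by
  rw [← Nat.map_div_right_divisors, Finset.card_map]

lemma key_s8 (n k : ℕ) :
    ∑ x ∈ Finset.Icc 1 n, ((x.divisors.card : ℝ)) ^ (k + 1) / (x : ℝ)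
      ≤ (∑ x ∈ Finset.Icc 1 n, ((x.divisors.card : ℝ)) ^ k / (x : ℝ)) ^ 2 := by
  have step1 : ∑ x ∈ Finset.Icc 1 n, ((x.divisors.card : ℝ)) ^ (k + 1) / (x : ℝ)
      = ∑ x ∈ Finset.Icc 1 n, ∑ _p ∈ x.divisorsAntidiagonal,
          ((x.divisors.card : ℝ)) ^ k / (x : ℝ) := by
    refine Finset.sum_congr rfl fun x hx => ?_
    rw [Finset.sum_const, card_DA, nsmul_eq_mul, pow_succ]
    ring
  rw [step1]
  have step2 : ∑ x ∈ Finset.Icc 1 n, ∑ _p ∈ x.divisorsAntidiagonal,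
          ((x.divisors.card : ℝ)) ^ k / (x : ℝ)
      ≤ ∑ x ∈ Finset.Icc 1 n, ∑ p ∈ x.divisorsAntidiagonal,
          (((p.1.divisors.card : ℝ)) ^ k / (p.1 : ℝ)) *
          (((p.2.divisors.card : ℝ)) ^ k / (p.2 : ℝ)) := by
    refine Finset.sum_le_sum fun x hx => Finset.sum_le_sum fun p hp => ?_
    rw [Nat.mem_divisorsAntidiagonal] at hp
    obtain ⟨hpx, hx0⟩ := hp
    have h1 : p.1 ≠ 0 := by rintro h; rw [← hpx, h] at hx0; simp at hx0
    have h2 : p.2 ≠ 0 := by rintro h; rw [← hpx, h] at hx0; simp at hx0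
    have hsub : (x.divisors.card : ℝ) ≤ (p.1.divisors.card : ℝ) * (p.2.divisors.card : ℝ) := by
      rw [← hpx]
      exact_mod_cast tau_submul p.1 p.2 h1 h2
    have hxpos : (0 : ℝ) < x := by
      exact_mod_cast Nat.pos_of_ne_zero hx0
    have hx' : (p.1:ℝ) * (p.2:ℝ) = (x:ℝ) := by exact_mod_cast congrArg (Nat.cast : ℕ → ℝ) hpx
    rw [div_mul_div_comm, ← mul_pow, hx']
    gcongr
  refine step2.trans ?_
  have hdisj : (↑(Finset.Icc 1 n : Finset ℕ) : Set ℕ).PairwiseDisjoint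
      (fun x => x.divisorsAntidiagonal) := by
    intro x hx y hy hxy
    simp only [Function.onFun, Finset.disjoint_left]
    intro p hpx hpy
    rw [Nat.mem_divisorsAntidiagonal] at hpx hpy
    exact hxy (hpx.1.symm.trans hpy.1)
  rw [← Finset.sum_biUnion hdisj]
  have hsubset : (Finset.Icc 1 n).biUnion (fun x => x.divisorsAntidiagonal)
      ⊆ Finset.Icc 1 n ×ˢ Finset.Icc 1 n := by
    intro p hp
    rw [Finset.mem_biUnion] at hp
    obtain ⟨x, hx, hpx⟩ := hp
    rw [Finset.mem_Icc] at hx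
    rw [Nat.mem_divisorsAntidiagonal] at hpx
    have h1 : p.1 ≠ 0 := by rintro h; rw [← hpx.1, h] at hpx; simp at hpx
    have h2 : p.2 ≠ 0 := by rintro h; rw [← hpx.1, h] at hpx; simp at hpx
    rw [Finset.mem_product, Finset.mem_Icc, Finset.mem_Icc]
    refine ⟨⟨Nat.one_le_iff_ne_zero.mpr h1, ?_⟩, Nat.one_le_iff_ne_zero.mpr h2, ?_⟩
    · calc p.1 ≤ p.1 * p.2 := Nat.le_mul_of_pos_right _ (Nat.pos_of_ne_zero h2)
        _ = x := hpx.1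
        _ ≤ n := hx.2
    · calc p.2 ≤ p.1 * p.2 := Nat.le_mul_of_pos_left _ (Nat.pos_of_ne_zero h1)
        _ = x := hpx.1
        _ ≤ n := hx.2
  refine (Finset.sum_le_sum_of_subset_of_nonneg hsubset fun p _ _ => by positivity).trans_eq ?_
  rw [Finset.sum_product, sq]
  rw [Finset.sum_mul]
  refine Finset.sum_congr rfl fun d hd => ?_
  rw [Finset.mul_sum]

theorem stmt_8 (n k : ℕ) (hn : 1 ≤ n) (hk : 1 ≤ k) :
    ∑ x ∈ Finset.Icc 1 n, ((x.divisors.card : ℝ)) ^ k / (x : ℝ)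
      ≤ (Real.log (Real.exp 1 * n)) ^ (2 ^ k) := by
  have hlog : Real.log (Real.exp 1 * n) = 1 + Real.log n := by
    rw [Real.log_mul (Real.exp_ne_zero 1) (by exact_mod_cast Nat.one_le_iff_ne_zero.mp hn),
      Real.log_exp]
  rw [hlog]
  have hbase : (0:ℝ) ≤ 1 + Real.log n := by
    have : (0:ℝ) ≤ Real.log n := Real.log_nonneg (by exact_mod_cast hn)
    linarith
  have main : ∀ m : ℕ, ∑ x ∈ Finset.Icc 1 n, ((x.divisors.card : ℝ)) ^ m / (x : ℝ)
      ≤ (1 + Real.log n) ^ (2 ^ m) := by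
    intro m
    induction m with
    | zero =>
      simp only [pow_zero, pow_one]
      have : ∑ x ∈ Finset.Icc 1 n, (1:ℝ) / (x : ℝ) = (harmonic n : ℝ) := by
        rw [harmonic_eq_sum_Icc]
        push_cast
        simp [one_div]
      rw [this]
      exact harmonic_le_one_add_log n
    | succ m ih =>
      have h1 := key_s8 n m
      have h2 : (∑ x ∈ Finset.Icc 1 n, ((x.divisors.card : ℝ)) ^ m / (x : ℝ)) ^ 2
          ≤ ((1 + Real.log n) ^ (2 ^ m)) ^ 2 := by
        apply pow_le_pow_left₀ ?_ ih
        positivity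
      calc _ ≤ _ := h1
        _ ≤ ((1 + Real.log n) ^ (2 ^ m)) ^ 2 := h2
        _ = (1 + Real.log n) ^ (2 ^ (m+1)) := by rw [← pow_mul, pow_succ]
  exact main k
end

section
/- If α, β, γ are odd positive integers such that −βγ is a quadratic residue mod α, −αγ is a quadratic residue mod β, and −αβ is a quadratic residue mod γ (as Jacobi symbols: (−βγ/α) = (−αγ/β) = (−αβ/γ) = 1), then α ≡ β ≡ γ (mod 4). -/
open ZMod

theorem stmt_10 (α β γ : ℕ) (hα : 0 < α) (hβ : 0 < β) (hγ : 0 < γ)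
    (hαo : Odd α) (hβo : Odd β) (hγo : Odd γ)
    (hαβ : Nat.Coprime α β) (hβγ : Nat.Coprime β γ) (hαγ : Nat.Coprime α γ)
    (h1 : jacobiSym (-((β : ℤ) * γ)) α = 1)
    (h2 : jacobiSym (-((α : ℤ) * γ)) β = 1)
    (h3 : jacobiSym (-((α : ℤ) * β)) γ = 1) :
    α % 4 = β % 4 ∧ β % 4 = γ % 4 := by
  rw [jacobiSym.neg _ hαo, jacobiSym.mul_left] at h1
  rw [jacobiSym.neg _ hβo, jacobiSym.mul_left] at h2
  rw [jacobiSym.neg _ hγo, jacobiSym.mul_left] at h3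
  have gβα : ((β : ℤ)).gcd α = 1 := by simpa using hαβ.symm
  have gγα : ((γ : ℤ)).gcd α = 1 := by simpa using hαγ.symm
  have gγβ : ((γ : ℤ)).gcd β = 1 := by simpa using hβγ.symm
  have sqx := jacobiSym.sq_one gβα
  have sqy := jacobiSym.sq_one gγα
  have sqz := jacobiSym.sq_one gγβ
  set A := α / 2 with hA'
  set B := β / 2 with hB'
  set C := γ / 2 with hC'
  have rab : jacobiSym (α : ℤ) β = (-1 : ℤ) ^ (A * B) * jacobiSym (β : ℤ) α :=
    jacobiSym.quadratic_reciprocity hαo hβo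
  have rac : jacobiSym (α : ℤ) γ = (-1 : ℤ) ^ (A * C) * jacobiSym (γ : ℤ) α :=
    jacobiSym.quadratic_reciprocity hαo hγo
  have rbc : jacobiSym (β : ℤ) γ = (-1 : ℤ) ^ (B * C) * jacobiSym (γ : ℤ) β :=
    jacobiSym.quadratic_reciprocity hβo hγo
  have cα : (χ₄ α : ℤ) = (-1) ^ A := χ₄_eq_neg_one_pow (Nat.odd_iff.mp hαo)
  have cβ : (χ₄ β : ℤ) = (-1) ^ B := χ₄_eq_neg_one_pow (Nat.odd_iff.mp hβo)
  have cγ : (χ₄ γ : ℤ) = (-1) ^ C := χ₄_eq_neg_one_pow (Nat.odd_iff.mp hγo)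
  rw [cα] at h1
  rw [cβ, rab] at h2
  rw [cγ, rac, rbc] at h3
  set x := jacobiSym (β : ℤ) α
  set y := jacobiSym (γ : ℤ) α
  set z := jacobiSym (γ : ℤ) β
  have pA2 : ((-1 : ℤ)) ^ A * (-1) ^ A = 1 := by
    rw [← pow_add]; exact Even.neg_one_pow ⟨A, rfl⟩
  have pB2 : ((-1 : ℤ)) ^ B * (-1) ^ B = 1 := by
    rw [← pow_add]; exact Even.neg_one_pow ⟨B, rfl⟩
  have pC2 : ((-1 : ℤ)) ^ C * (-1) ^ C = 1 := by
    rw [← pow_add]; exact Even.neg_one_pow ⟨C, rfl⟩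
  -- isolate the symbol products
  have e1 : x * y = (-1 : ℤ) ^ A := by
    linear_combination ((-1 : ℤ) ^ A) * h1 - (x * y) * pA2
  have e2 : (-1 : ℤ) ^ (A * B) * x * z = (-1 : ℤ) ^ B := by
    linear_combination ((-1 : ℤ) ^ B) * h2 - ((-1 : ℤ) ^ (A * B) * x * z) * pB2
  have e3 : (-1 : ℤ) ^ (A * C) * y * ((-1 : ℤ) ^ (B * C) * z) = (-1 : ℤ) ^ C := by
    linear_combination ((-1 : ℤ) ^ C) * h3 -
      ((-1 : ℤ) ^ (A * C) * y * ((-1 : ℤ) ^ (B * C) * z)) * pC2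
  have key : (-1 : ℤ) ^ (A * B) * ((-1 : ℤ) ^ (A * C) * (-1 : ℤ) ^ (B * C)) =
      (-1 : ℤ) ^ A * ((-1 : ℤ) ^ B * (-1 : ℤ) ^ C) := by
    linear_combination ((-1 : ℤ) ^ (A * B) * x * z *
        ((-1 : ℤ) ^ (A * C) * (-1 : ℤ) ^ (B * C) * y * z)) * e1 +
      ((-1 : ℤ) ^ A * ((-1 : ℤ) ^ (A * C) * (-1 : ℤ) ^ (B * C) * y * z)) * e2 +
      ((-1 : ℤ) ^ A * (-1 : ℤ) ^ B) * e3 -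
      ((-1 : ℤ) ^ (A * B) * ((-1 : ℤ) ^ (A * C) * (-1 : ℤ) ^ (B * C)) * y ^ 2 * z ^ 2) * sqx -
      ((-1 : ℤ) ^ (A * B) * ((-1 : ℤ) ^ (A * C) * (-1 : ℤ) ^ (B * C)) * z ^ 2) * sqy -
      ((-1 : ℤ) ^ (A * B) * ((-1 : ℤ) ^ (A * C) * (-1 : ℤ) ^ (B * C))) * sqz
  have key' : (-1 : ℤ) ^ (A * B + A * C + B * C) = (-1 : ℤ) ^ (A + B + C) := by
    rw [pow_add, pow_add, pow_add, pow_add, mul_assoc, mul_assoc]; exact key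
  have hmn : Even (A * B + A * C + B * C + (A + B + C)) := by
    refine (neg_one_pow_eq_one_iff_even (R := ℤ) (by norm_num)).mp ?_
    rw [pow_add, key', ← pow_add]
    exact Even.neg_one_pow ⟨A + B + C, rfl⟩
  have hX : (A * B + A * C + B * C + (A + B + C)) % 2 = 0 := Nat.even_iff.mp hmn
  have m1 : A % 2 * (B % 2) ≡ A * B [MOD 2] := (Nat.mod_modEq A 2).mul (Nat.mod_modEq B 2)
  have m2 : A % 2 * (C % 2) ≡ A * C [MOD 2] := (Nat.mod_modEq A 2).mul (Nat.mod_modEq C 2)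
  have m3 : B % 2 * (C % 2) ≡ B * C [MOD 2] := (Nat.mod_modEq B 2).mul (Nat.mod_modEq C 2)
  have e : (A % 2 * (B % 2) + A % 2 * (C % 2) + B % 2 * (C % 2) + (A + B + C)) % 2 =
      (A * B + A * C + B * C + (A + B + C)) % 2 := ((m1.add m2).add m3).add_right (A + B + C)
  have hmod : (A % 2 * (B % 2) + A % 2 * (C % 2) + B % 2 * (C % 2) + (A + B + C)) % 2 = 0 :=
    e.trans hX
  have hαo' : α % 2 = 1 := Nat.odd_iff.mp hαo
  have hβo' : β % 2 = 1 := Nat.odd_iff.mp hβo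
  have hγo' : γ % 2 = 1 := Nat.odd_iff.mp hγo
  rcases Nat.mod_two_eq_zero_or_one A with hA2 | hA2 <;>
    rcases Nat.mod_two_eq_zero_or_one B with hB2 | hB2 <;>
      rcases Nat.mod_two_eq_zero_or_one C with hC2 | hC2 <;>
        rw [hA2, hB2, hC2] at hmod <;> omega
end

section
/- If p ≠ 3 is a prime and a is an integer not divisible by p, then the congruence x³ + a·x ≡ n (mod p) is solvable in x for exactly ⌊(2p+1)/3⌋ congruence classes n modulo p. -/
open Finset

section helpers
variable {F : Type*} [Field F] [Fintype F] [DecidableEq F]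

private lemma sqrt_count (hF : ringChar F ≠ 2) (b : F) :
    ((univ.filter fun x : F => x ^ 2 = b).card : ℤ) = quadraticChar F b + 1 := by
  have := quadraticChar_card_sqrts hF b
  rwa [Set.toFinset_setOf] at this

private lemma quad_count (hF : ringChar F ≠ 2) (h2 : (2 : F) ≠ 0) (u v : F) :
    ((univ.filter fun y : F => y ^ 2 + u * y + v = 0).card : ℤ)
      = quadraticChar F (u ^ 2 - 4 * v) + 1 := by
  rw [← sqrt_count hF]
  congr 1
  apply Finset.card_bij' (fun y _ => 2 * y + u) (fun x _ => (x - u) * 2⁻¹)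
  · intro y hy
    simp only [mem_filter, mem_univ, true_and] at hy ⊢
    linear_combination (4 : F) * hy
  · intro x hx
    simp only [mem_filter, mem_univ, true_and] at hx ⊢
    field_simp
    linear_combination hx
  · intro y _; field_simp; ring
  · intro x _; field_simp; ring

private lemma sum_quadChar_sq_add (hF : ringChar F ≠ 2) {c : F} (hc : c ≠ 0) :
    ∑ x : F, quadraticChar F (x ^ 2 + c) = -1 := by
  have hshift : ∑ j : F, quadraticChar F (j + c) = 0 := by
    exact (Fintype.sum_equiv (Equiv.addRight c) _ (quadraticChar F) (fun j => rfl)).trans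
      (quadraticChar_sum_zero hF)
  have hJ : ∑ j : F, quadraticChar F j * quadraticChar F (j + c) = -1 := by
    rw [← Finset.sum_erase (univ : Finset F) (a := (0 : F)) (by simp)]
    have step : ∀ j ∈ (univ : Finset F).erase 0,
        quadraticChar F j * quadraticChar F (j + c) = quadraticChar F (1 + c * j⁻¹) := by
      intro j hj
      have hj0 : j ≠ 0 := Finset.ne_of_mem_erase hj
      have : j * (j + c) = j ^ 2 * (1 + c * j⁻¹) := by field_simp
      rw [← map_mul, this, map_mul, quadraticChar_sq_one' hj0, one_mul]
    rw [Finset.sum_congr rfl step]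
    have hbij : ∑ j ∈ (univ : Finset F).erase 0, quadraticChar F (1 + c * j⁻¹)
        = ∑ u ∈ (univ : Finset F).erase 1, quadraticChar F u := by
      apply Finset.sum_nbij' (i := fun j => 1 + c * j⁻¹) (j := fun u => c * (u - 1)⁻¹)
      · intro j hj
        have hj0 : j ≠ 0 := Finset.ne_of_mem_erase hj
        simp only [Finset.mem_erase, Finset.mem_univ, and_true]
        intro h
        have : c * j⁻¹ = 0 := by linear_combination h
        exact (mul_ne_zero hc (inv_ne_zero hj0)) this
      · intro u hu
        have hu1 : u ≠ 1 := Finset.ne_of_mem_erase hu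
        simp only [Finset.mem_erase, Finset.mem_univ, and_true]
        exact mul_ne_zero hc (inv_ne_zero (sub_ne_zero.mpr hu1))
      · intro j hj
        have hj0 : j ≠ 0 := Finset.ne_of_mem_erase hj
        field_simp
        simp [hc]
      · intro u hu
        have hu1 : u ≠ 1 := Finset.ne_of_mem_erase hu
        have h1 : u - 1 ≠ 0 := sub_ne_zero.mpr hu1
        field_simp
        ring
      · intro j hj; rfl
    rw [hbij, Finset.sum_erase_eq_sub (Finset.mem_univ 1), quadraticChar_sum_zero hF, map_one]
    norm_num
  have hfib : ∑ j : F, ∑ _x ∈ univ.filter (fun x : F => x ^ 2 = j), quadraticChar F (j + c)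
      = ∑ x : F, quadraticChar F (x ^ 2 + c) :=
    Finset.sum_fiberwise_of_maps_to' (fun x _ => Finset.mem_univ _) _
  calc ∑ x : F, quadraticChar F (x ^ 2 + c)
      = ∑ j : F, ∑ _x ∈ univ.filter (fun x : F => x ^ 2 = j), quadraticChar F (j + c) :=
        hfib.symm
    _ = ∑ j : F, ((univ.filter fun x : F => x ^ 2 = j).card : ℤ) * quadraticChar F (j + c) := by
        simp [Finset.sum_const, nsmul_eq_mul]
    _ = ∑ j : F, (quadraticChar F j + 1) * quadraticChar F (j + c) :=
        Finset.sum_congr rfl fun j _ => by rw [sqrt_count hF]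
    _ = (∑ j : F, quadraticChar F j * quadraticChar F (j + c)) + ∑ j : F, quadraticChar F (j + c) := by
        rw [← Finset.sum_add_distrib]; exact Finset.sum_congr rfl fun j _ => by ring
    _ = -1 := by rw [hJ, hshift, add_zero]

private lemma count_three_sq (hF : ringChar F ≠ 2) (h3 : (3 : F) ≠ 0) (b : F) :
    ∑ x : F, (if 3 * x ^ 2 + b = 0 then (1 : ℤ) else 0)
      = quadraticChar F (-b * 3⁻¹) + 1 := by
  rw [Finset.sum_boole, ← sqrt_count hF]
  norm_cast
  congr 1
  ext x
  simp only [Finset.mem_filter, Finset.mem_univ, true_and]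
  constructor
  · intro h
    field_simp
    linear_combination h
  · intro h
    rw [h]
    field_simp
    ring

private lemma sum_quadChar_main (hF : ringChar F ≠ 2) (h2 : (2 : F) ≠ 0) (h3 : (3 : F) ≠ 0)
    {b : F} (hb : b ≠ 0) :
    ∑ x : F, quadraticChar F (-3 * x ^ 2 - 4 * b) = - quadraticChar F (-3) := by
  have h4 : (4 : F) ≠ 0 := by
    have : (4 : F) = 2 ^ 2 := by norm_num
    rw [this]; exact pow_ne_zero 2 h2
  have hc : (4 * b * (3 : F)⁻¹) ≠ 0 :=
    mul_ne_zero (mul_ne_zero h4 hb) (inv_ne_zero h3)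
  have hrw : ∀ x : F, -3 * x ^ 2 - 4 * b = (-3) * (x ^ 2 + 4 * b * 3⁻¹) := by
    intro x; field_simp; ring
  simp_rw [hrw, map_mul]
  rw [← Finset.mul_sum, sum_quadChar_sq_add hF hc]
  ring

/-- quadratic fiber set -/
private def Qset (A x : F) : Finset F := univ.filter fun y => y ^ 2 + x * y + (x ^ 2 + A) = 0

/-- fiber of the cubic map -/
private def fib (A n : F) : Finset F := univ.filter fun y => y ^ 3 + A * y = n

private lemma fib_eq (A x : F) : fib A (x ^ 3 + A * x) = insert x (Qset A x) := by
  ext y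
  simp only [fib, Qset, mem_filter, mem_univ, true_and, mem_insert]
  constructor
  · intro h
    rcases mul_eq_zero.mp (show (y - x) * (y ^ 2 + x * y + (x ^ 2 + A)) = 0 by
        linear_combination h) with h' | h'
    · exact Or.inl (sub_eq_zero.mp h')
    · exact Or.inr h'
  · rintro (rfl | h)
    · rfl
    · linear_combination (y - x) * h

private lemma Q_card (hF : ringChar F ≠ 2) (h2 : (2 : F) ≠ 0) (A x : F) :
    ((Qset A x).card : ℤ) = quadraticChar F (-3 * x ^ 2 - 4 * A) + 1 := by
  rw [Qset, quad_count hF h2]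
  have : x ^ 2 - 4 * (x ^ 2 + A) = -3 * x ^ 2 - 4 * A := by ring
  rw [this]

private lemma mem_Q (A x : F) : x ∈ Qset A x ↔ 3 * x ^ 2 + A = 0 := by
  simp only [Qset, mem_filter, mem_univ, true_and]
  constructor <;> intro h <;> linear_combination h

private lemma fib_key (hF : ringChar F ≠ 2) (h2 : (2 : F) ≠ 0) (h3 : (3 : F) ≠ 0)
    {A : F} (hA : A ≠ 0) (x : F) :
    ((6 / (fib A (x ^ 3 + A * x)).card : ℕ) : ℤ)
      = 4 - 2 * quadraticChar F (-3 * x ^ 2 - 4 * A)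
        - (if 3 * x ^ 2 + 4 * A = 0 then 1 else 0)
        + (if 3 * x ^ 2 + A = 0 then 1 else 0) := by
  have hD := Q_card hF h2 A x
  have hNx : (fib A (x ^ 3 + A * x)).card
      = if x ∈ Qset A x then (Qset A x).card else (Qset A x).card + 1 := by
    rw [fib_eq, Finset.card_insert_eq_ite]
  by_cases h1 : 3 * x ^ 2 + A = 0
  · have hD0 : -3 * x ^ 2 - 4 * A = -3 * A := by linear_combination -h1
    have hDne' : -3 * x ^ 2 - 4 * A ≠ 0 := by
      rw [hD0]; exact mul_ne_zero (neg_ne_zero.mpr h3) hA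
    have hQpos : 0 < (Qset A x).card := Finset.card_pos.mpr ⟨x, (mem_Q A x).mpr h1⟩
    have hχ1 : quadraticChar F (-3 * x ^ 2 - 4 * A) = 1 := by
      rcases quadraticChar_dichotomy hDne' with h | h
      · exact h
      · rw [h] at hD; omega
    have hc2 : (Qset A x).card = 2 := by rw [hχ1] at hD; omega
    have h4ne : ¬ (3 * x ^ 2 + 4 * A = 0) := by
      intro h4
      have : (3 : F) * A = 0 := by linear_combination h4 - h1
      exact mul_ne_zero h3 hA this
    rw [hNx, if_pos ((mem_Q A x).mpr h1), hc2, hχ1, if_pos h1, if_neg h4ne]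
    norm_num
  · have hxnot : x ∉ Qset A x := fun hx => h1 ((mem_Q A x).mp hx)
    by_cases h4 : 3 * x ^ 2 + 4 * A = 0
    · have hD0 : -3 * x ^ 2 - 4 * A = 0 := by linear_combination -h4
      have hχ0 : quadraticChar F (-3 * x ^ 2 - 4 * A) = 0 := by
        rw [hD0]; exact quadraticChar_zero
      have hc1 : (Qset A x).card = 1 := by rw [hχ0] at hD; omega
      rw [hNx, if_neg hxnot, hc1, hχ0, if_neg h1, if_pos h4]
      norm_num
    · have hDne : -3 * x ^ 2 - 4 * A ≠ 0 := fun hD0 => h4 (by linear_combination -hD0)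
      rcases quadraticChar_dichotomy hDne with hχ | hχ
      · have hc2 : (Qset A x).card = 2 := by rw [hχ] at hD; omega
        rw [hNx, if_neg hxnot, hc2, hχ, if_neg h1, if_neg h4]
        norm_num
      · have hc0 : (Qset A x).card = 0 := by rw [hχ] at hD; omega
        rw [hNx, if_neg hxnot, hc0, hχ, if_neg h1, if_neg h4]
        norm_num

private lemma main_count (hF : ringChar F ≠ 2) (h2 : (2 : F) ≠ 0) (h3 : (3 : F) ≠ 0)
    {A : F} (hA : A ≠ 0) :
    6 * ((univ.image fun x : F => x ^ 3 + A * x).card : ℤ)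
      = 4 * (Fintype.card F : ℤ) + 2 * quadraticChar F (-3) := by
  have hQle : ∀ x : F, (Qset A x).card ≤ 2 := by
    intro x
    have hD := Q_card hF h2 A x
    have hχle : quadraticChar F (-3 * x ^ 2 - 4 * A) ≤ 1 := by
      by_cases h : -3 * x ^ 2 - 4 * A = 0
      · rw [h, quadraticChar_zero]; norm_num
      · rcases quadraticChar_dichotomy h with h' | h' <;> rw [h'] <;> norm_num
    have : ((Qset A x).card : ℤ) ≤ 2 := by rw [hD]; linarith
    exact_mod_cast this
  have hfible : ∀ x : F, (fib A (x ^ 3 + A * x)).card ≤ 3 := by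
    intro x
    rw [fib_eq]
    calc (insert x (Qset A x)).card ≤ (Qset A x).card + 1 := Finset.card_insert_le _ _
      _ ≤ 3 := by have := hQle x; omega
  have hsum1 : ∑ x : F, ((6 / (fib A (x ^ 3 + A * x)).card : ℕ) : ℤ)
      = 6 * ((univ.image fun x : F => x ^ 3 + A * x).card : ℤ) := by
    rw [← Finset.sum_fiberwise_of_maps_to' (g := fun x : F => x ^ 3 + A * x)
        (t := univ.image fun x : F => x ^ 3 + A * x)
        (fun x _ => Finset.mem_image_of_mem _ (Finset.mem_univ x))
        (fun n => ((6 / (fib A n).card : ℕ) : ℤ))]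
    have hinner : ∀ j ∈ (univ.image fun x : F => x ^ 3 + A * x),
        (∑ _x ∈ univ.filter fun x : F => x ^ 3 + A * x = j, ((6 / (fib A j).card : ℕ) : ℤ)) = 6 := by
      intro j hj
      rw [Finset.sum_const, nsmul_eq_mul]
      show ((fib A j).card : ℤ) * ((6 / (fib A j).card : ℕ) : ℤ) = 6
      obtain ⟨x, -, rfl⟩ := Finset.mem_image.mp hj
      have hl : 1 ≤ (fib A (x ^ 3 + A * x)).card :=
        Finset.card_pos.mpr ⟨x, by simp [fib]⟩
      have hu : (fib A (x ^ 3 + A * x)).card ≤ 3 := hfible x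
      have h136 : (fib A (x ^ 3 + A * x)).card = 1 ∨ (fib A (x ^ 3 + A * x)).card = 2
          ∨ (fib A (x ^ 3 + A * x)).card = 3 := by omega
      rcases h136 with h | h | h <;> rw [h] <;> norm_num
    rw [Finset.sum_congr rfl hinner, Finset.sum_const, nsmul_eq_mul, mul_comm]
  rw [← hsum1, Finset.sum_congr rfl (fun x _ => fib_key hF h2 h3 hA x)]
  have e1 : ∑ _x : F, (4 : ℤ) = 4 * (Fintype.card F : ℤ) := by
    rw [Finset.sum_const, nsmul_eq_mul, Finset.card_univ, mul_comm]
  have e2 : ∑ x : F, 2 * quadraticChar F (-3 * x ^ 2 - 4 * A)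
      = 2 * (- quadraticChar F (-3)) := by
    rw [← Finset.mul_sum, sum_quadChar_main hF h2 h3 hA]
  have e3 : ∑ x : F, (if 3 * x ^ 2 + 4 * A = 0 then (1 : ℤ) else 0)
      = ∑ x : F, (if 3 * x ^ 2 + A = 0 then (1 : ℤ) else 0) := by
    rw [count_three_sq hF h3, count_three_sq hF h3]
    have h44 : (-(4 * A) * 3⁻¹ : F) = 2 ^ 2 * (-A * 3⁻¹) := by ring
    rw [h44, map_mul, quadraticChar_sq_one' h2, one_mul]
  rw [Finset.sum_add_distrib, Finset.sum_sub_distrib, Finset.sum_sub_distrib, e1, e2, ← e3]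
  ring

end helpers

lemma zmod2_ne_zero_eq_one : ∀ z : ZMod 2, z ≠ 0 → z = 1 := by decide

lemma zmod2_image_card :
    (Finset.univ.image (fun x : ZMod 2 => x ^ 3 + x)).card = (2 * 2 + 1) / 3 := by decide

theorem stmt_12 (p : ℕ) (hp : p.Prime) (hp3 : p ≠ 3) (a : ℤ) (ha : ¬ (p : ℤ) ∣ a) :
    Nat.card {n : ZMod p | ∃ x : ZMod p, x ^ 3 + (a : ZMod p) * x = n}
      = (2 * p + 1) / 3 := by
  have hfact : Fact p.Prime := ⟨hp⟩
  have hcard : Nat.card {n : ZMod p | ∃ x : ZMod p, x ^ 3 + (a : ZMod p) * x = n}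
      = (Finset.univ.image (fun x : ZMod p => x ^ 3 + (a : ZMod p) * x)).card := by
    have h1 : {n : ZMod p | ∃ x : ZMod p, x ^ 3 + (a : ZMod p) * x = n}
        = Set.range (fun x : ZMod p => x ^ 3 + (a : ZMod p) * x) := rfl
    rw [h1, Nat.card_coe_set_eq, Set.ncard_eq_toFinset_card', Set.toFinset_range]
  rw [hcard]
  have hA0 : (a : ZMod p) ≠ 0 := fun h => ha ((ZMod.intCast_zmod_eq_zero_iff_dvd a p).mp h)
  by_cases hp2 : p = 2
  · subst hp2
    have ha2 : (a : ZMod 2) = 1 := zmod2_ne_zero_eq_one _ hA0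
    have hfeq : (fun x : ZMod 2 => x ^ 3 + (a : ZMod 2) * x) = fun x : ZMod 2 => x ^ 3 + x := by
      funext x; rw [ha2, one_mul]
    rw [hfeq]
    exact zmod2_image_card
  · have hchar : ringChar (ZMod p) ≠ 2 := by rw [ZMod.ringChar_zmod_n]; exact hp2
    have h2 : (2 : ZMod p) ≠ 0 := by
      intro h
      exact hp2 ((Nat.prime_dvd_prime_iff_eq hp Nat.prime_two).mp
        ((ZMod.natCast_eq_zero_iff 2 p).mp (by exact_mod_cast h)))
    have h3 : (3 : ZMod p) ≠ 0 := by
      intro h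
      exact hp3 ((Nat.prime_dvd_prime_iff_eq hp Nat.prime_three).mp
        ((ZMod.natCast_eq_zero_iff 3 p).mp (by exact_mod_cast h)))
    have hmain := main_count hchar h2 h3 hA0
    rw [ZMod.card p] at hmain
    have h3ne : (-3 : ZMod p) ≠ 0 := neg_ne_zero.mpr h3
    rcases quadraticChar_dichotomy h3ne with hd | hd <;> rw [hd] at hmain <;> omega
end

section
/- For every integer n ≥ 0 and reals a₁,…,a₁₆ with a₁+⋯+a₁₆ = 0, the number of 3-element subsets I of {1,…,16} with Σ_{i∈I} aᵢ ≥ 0 is at least C(15,2) = 105. -/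
set_option maxRecDepth 100000
set_option maxHeartbeats 1000000

open Finset

/-- If some "dominating" triple condition holds for a monotone `b`, all triples
componentwise above it have nonnegative sum. -/
lemma mms_count_ge (b : Fin 16 → ℝ) (hm : Monotone b) (p q r : Fin 16)
    (hc : 0 ≤ b p + b q + b r)
    (hcard : 105 ≤ ((Finset.univ.powersetCard 3).filter
      (fun I : Finset (Fin 16) => ∃ x ∈ I, ∃ y ∈ I, ∃ z ∈ I,
        x < y ∧ y < z ∧ p ≤ x ∧ q ≤ y ∧ r ≤ z)).card) :
    105 ≤ ((Finset.univ.powersetCard 3).filter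
      (fun I : Finset (Fin 16) => 0 ≤ ∑ i ∈ I, b i)).card := by
  refine hcard.trans (Finset.card_le_card ?_)
  intro I hI
  rw [Finset.mem_filter] at hI ⊢
  obtain ⟨hIp, x, hx, y, hy, z, hz, hxy, hyz, hpx, hqy, hrz⟩ := hI
  refine ⟨hIp, ?_⟩
  have hcard3 : I.card = 3 := (Finset.mem_powersetCard.mp hIp).2
  have hsub : ({x, y, z} : Finset (Fin 16)) ⊆ I := by
    intro t ht
    simp only [Finset.mem_insert, Finset.mem_singleton] at ht
    rcases ht with rfl | rfl | rfl <;> assumption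
  have hne1 : x ∉ ({y, z} : Finset (Fin 16)) := by
    simp [hxy.ne, (hxy.trans hyz).ne]
  have hne2 : y ∉ ({z} : Finset (Fin 16)) := by simp [hyz.ne]
  have hxyz : ({x, y, z} : Finset (Fin 16)).card = 3 := by
    rw [Finset.card_insert_of_notMem hne1, Finset.card_insert_of_notMem hne2,
      Finset.card_singleton]
  have hIe : I = ({x, y, z} : Finset (Fin 16)) :=
    (Finset.eq_of_subset_of_card_le hsub (by omega)).symm
  rw [hIe, Finset.sum_insert hne1, Finset.sum_insert hne2, Finset.sum_singleton]
  linarith [hm hpx, hm hqy, hm hrz]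

lemma mms_card1 : 105 ≤ ((Finset.univ.powersetCard 3).filter
    (fun I : Finset (Fin 16) => ∃ x ∈ I, ∃ y ∈ I, ∃ z ∈ I,
      x < y ∧ y < z ∧ (0:Fin 16) ≤ x ∧ (1:Fin 16) ≤ y ∧ (15:Fin 16) ≤ z)).card := by
  decide

lemma mms_card2 : 105 ≤ ((Finset.univ.powersetCard 3).filter
    (fun I : Finset (Fin 16) => ∃ x ∈ I, ∃ y ∈ I, ∃ z ∈ I,
      x < y ∧ y < z ∧ (3:Fin 16) ≤ x ∧ (7:Fin 16) ≤ y ∧ (14:Fin 16) ≤ z)).card := by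
  decide

lemma mms_card3 : 105 ≤ ((Finset.univ.powersetCard 3).filter
    (fun I : Finset (Fin 16) => ∃ x ∈ I, ∃ y ∈ I, ∃ z ∈ I,
      x < y ∧ y < z ∧ (4:Fin 16) ≤ x ∧ (9:Fin 16) ≤ y ∧ (13:Fin 16) ≤ z)).card := by
  decide

lemma mms_card4 : 105 ≤ ((Finset.univ.powersetCard 3).filter
    (fun I : Finset (Fin 16) => ∃ x ∈ I, ∃ y ∈ I, ∃ z ∈ I,
      x < y ∧ y < z ∧ (4:Fin 16) ≤ x ∧ (10:Fin 16) ≤ y ∧ (11:Fin 16) ≤ z)).card := by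
  decide

lemma mms_card5 : 105 ≤ ((Finset.univ.powersetCard 3).filter
    (fun I : Finset (Fin 16) => ∃ x ∈ I, ∃ y ∈ I, ∃ z ∈ I,
      x < y ∧ y < z ∧ (5:Fin 16) ≤ x ∧ (9:Fin 16) ≤ y ∧ (12:Fin 16) ≤ z)).card := by
  decide

lemma mms_card6 : 105 ≤ ((Finset.univ.powersetCard 3).filter
    (fun I : Finset (Fin 16) => ∃ x ∈ I, ∃ y ∈ I, ∃ z ∈ I,
      x < y ∧ y < z ∧ (6:Fin 16) ≤ x ∧ (8:Fin 16) ≤ y ∧ (11:Fin 16) ≤ z)).card := by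
  decide

lemma mms_sorted (b : Fin 16 → ℝ) (hm : Monotone b) (hs : ∑ i, b i = 0) :
    105 ≤ ((Finset.univ.powersetCard 3).filter
      (fun I : Finset (Fin 16) => 0 ≤ ∑ i ∈ I, b i)).card := by
  by_cases h1 : 0 ≤ b 0 + b 1 + b 15
  · exact mms_count_ge b hm 0 1 15 h1 mms_card1
  by_cases h2 : 0 ≤ b 3 + b 7 + b 14
  · exact mms_count_ge b hm 3 7 14 h2 mms_card2
  by_cases h3 : 0 ≤ b 4 + b 9 + b 13
  · exact mms_count_ge b hm 4 9 13 h3 mms_card3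
  by_cases h4 : 0 ≤ b 4 + b 10 + b 11
  · exact mms_count_ge b hm 4 10 11 h4 mms_card4
  by_cases h5 : 0 ≤ b 5 + b 9 + b 12
  · exact mms_count_ge b hm 5 9 12 h5 mms_card5
  by_cases h6 : 0 ≤ b 6 + b 8 + b 11
  · exact mms_count_ge b hm 6 8 11 h6 mms_card6
  exfalso
  push_neg at h1 h2 h3 h4 h5 h6
  have hsum : b 0 + b 1 + b 2 + b 3 + b 4 + b 5 + b 6 + b 7 + b 8 + b 9 + b 10
      + b 11 + b 12 + b 13 + b 14 + b 15 = 0 := by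
    have := hs
    rw [show (Finset.univ : Finset (Fin 16)) =
        ({0,1,2,3,4,5,6,7,8,9,10,11,12,13,14,15} : Finset (Fin 16)) from by decide] at this
    repeat rw [Finset.sum_insert (by decide)] at this
    rw [Finset.sum_singleton] at this
    linarith
  have c0 : b 0 ≤ b 1 := hm (by decide)
  have c1 : b 1 ≤ b 2 := hm (by decide)
  have c2 : b 2 ≤ b 3 := hm (by decide)
  have c3 : b 3 ≤ b 4 := hm (by decide)
  have c4 : b 4 ≤ b 5 := hm (by decide)
  have c5 : b 5 ≤ b 6 := hm (by decide)
  have c6 : b 6 ≤ b 7 := hm (by decide)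
  have c7 : b 7 ≤ b 8 := hm (by decide)
  have c8 : b 8 ≤ b 9 := hm (by decide)
  have c9 : b 9 ≤ b 10 := hm (by decide)
  have c10 : b 10 ≤ b 11 := hm (by decide)
  have c11 : b 11 ≤ b 12 := hm (by decide)
  have c12 : b 12 ≤ b 13 := hm (by decide)
  have c13 : b 13 ≤ b 14 := hm (by decide)
  have c14 : b 14 ≤ b 15 := hm (by decide)
  linarith

theorem stmt_18 (a : Fin 16 → ℝ) (h : ∑ i, a i = 0) :
    105 ≤ ((Finset.univ.powersetCard 3).filter
      (fun I : Finset (Fin 16) => 0 ≤ ∑ i ∈ I, a i)).card := by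
  classical
  set σ := Tuple.sort a with hσ
  have hmono : Monotone (a ∘ σ) := Tuple.monotone_sort a
  have hsum : ∑ i, (a ∘ σ) i = 0 := by
    rw [show ∑ i, (a ∘ σ) i = ∑ i, a i from Equiv.sum_comp σ a]
    exact h
  have key := mms_sorted (a ∘ σ) hmono hsum
  refine le_trans key (le_of_eq ?_)
  apply Finset.card_bij (fun I _ => I.image σ)
  · intro I hI
    rw [Finset.mem_filter] at hI ⊢
    obtain ⟨hIp, hIs⟩ := hI
    refine ⟨?_, ?_⟩
    · rw [Finset.mem_powersetCard] at hIp ⊢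
      exact ⟨Finset.subset_univ _, by
        rw [Finset.card_image_of_injective _ σ.injective]; exact hIp.2⟩
    · rw [Finset.sum_image (by exact fun x _ y _ hxy => σ.injective hxy)]
      exact hIs
  · intro I hI J hJ hIJ
    have : Function.Injective (Finset.image σ) := Finset.image_injective σ.injective
    exact this hIJ
  · intro J hJ
    refine ⟨J.image σ.symm, ?_, ?_⟩
    · rw [Finset.mem_filter] at hJ ⊢
      obtain ⟨hJp, hJs⟩ := hJ
      refine ⟨?_, ?_⟩
      · rw [Finset.mem_powersetCard] at hJp ⊢
        exact ⟨Finset.subset_univ _, by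
          rw [Finset.card_image_of_injective _ σ.symm.injective]; exact hJp.2⟩
      · rw [Finset.sum_image (by exact fun x _ y _ hxy => σ.symm.injective hxy)]
        simpa using hJs
    · rw [Finset.image_image]
      simp
end
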